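/- arXiv:2506.17997 — 12 statements merged into one kernel-verified Lean document; each statement's English description precedes it below -/
import Mathlib

section
/- Every serial dictatorship rule f^▷ (where agents sequentially pick their most preferred remaining object according to a fixed strict priority order ▷ over agents) satisfies Maskin monotonicity: if f^▷(R) = μ and R' is a μ-monotonic transformation of R, then f^▷(R') = μ. -/
open Finset
open scoped Classical

structure Pref (O : Type) where
  pref : O → O → Prop
  irrefl : ∀ x, ¬ pref x x
  trans : ∀ {x y z}, pref x y → pref y z → pref x z
  total : ∀ x y, x ≠ y → pref x y ∨ pref y x

/-- weak preference: `x` weakly preferred to `y`. -/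
def Pref.wpref {O : Type} (R : Pref O) (x y : O) : Prop := x = y ∨ R.pref x y

/-- `R'` is a `μ`-monotonic transformation of `R`. -/
def MonTransf {N O : Type} (R R' : N → Pref O) (μ : N → O) : Prop :=
  ∀ i y, (R' i).pref y (μ i) → (R i).pref y (μ i)

/-- `Ri'` differs from `Ri` by a swap of the two objects `x, y` adjacent in `Ri` (with `x Pᵢ y`). -/
def IsAdjSwap {O : Type} (Ri Ri' : Pref O) (x y : O) : Prop :=
  x ≠ y ∧ Ri.pref x y ∧ Ri'.pref y x ∧
  (∀ a b, a ≠ x → b ≠ x → (Ri.pref a b ↔ Ri'.pref a b)) ∧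
  (∀ a b, a ≠ y → b ≠ y → (Ri.pref a b ↔ Ri'.pref a b)) ∧
  (∀ a, a ≠ x → a ≠ y → (Ri.pref a x ↔ Ri.pref a y))

/-- A deterministic assignment respecting capacities. -/
structure Assignment (N O : Type) [Fintype N] (q : O → ℕ) where
  toFun : N → O
  capacity : ∀ x : O, (Finset.univ.filter fun i => toFun i = x).card ≤ q x

noncomputable instance {N O : Type} [Fintype N] [Fintype O] {q : O → ℕ} :
    Fintype (Assignment N O q) :=
  Fintype.ofInjective Assignment.toFun (fun μ ν h => by cases μ; cases ν; simpa using h)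

/-- A lottery over deterministic assignments. -/
structure Lottery (N O : Type) [Fintype N] [Fintype O] (q : O → ℕ) where
  prob : Assignment N O q → ℝ
  nonneg : ∀ μ, 0 ≤ prob μ
  sum_one : ∑ μ, prob μ = 1

/-- Individual object-assignment probability `p^{ia}`. -/
noncomputable def margin {N O : Type} [Fintype N] [Fintype O] {q : O → ℕ}
    (p : Lottery N O q) (i : N) (a : O) : ℝ :=
  ∑ μ ∈ Finset.univ.filter (fun μ : Assignment N O q => μ.toFun i = a), p.prob μ

/-- Probabilistic (Maskin) monotonicity of a random assignment rule. -/
def ProbMono {N O : Type} [Fintype N] [Fintype O] {q : O → ℕ}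
    (f : (N → Pref O) → Lottery N O q) : Prop :=
  ∀ (R R' : N → Pref O) (μ : Assignment N O q),
    MonTransf R R' μ.toFun → (f R).prob μ ≤ (f R').prob μ

/-- Pareto efficiency of a deterministic assignment at profile `R`. -/
def Efficient {N O : Type} [Fintype N] {q : O → ℕ}
    (R : N → Pref O) (μ : Assignment N O q) : Prop :=
  ¬ ∃ ν : Assignment N O q,
      (∀ i, (R i).wpref (ν.toFun i) (μ.toFun i)) ∧
      ∃ j, (R j).pref (ν.toFun j) (μ.toFun j)

/-- Most-preferred element of a finite set of objects. -/
noncomputable def Pref.best {O : Type} [Nonempty O] (R : Pref O) (S : Finset O) : O :=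
  if h : ∃ x ∈ S, ∀ y ∈ S, y ≠ x → R.pref x y then h.choose else Classical.arbitrary O

/-- Serial dictatorship: list of objects chosen by the first `k` agents in priority order `π`. -/
noncomputable def sdAux {N O : Type} [Fintype N] [Fintype O] [Nonempty O]
    (q : O → ℕ) (R : N → Pref O) (π : Fin (Fintype.card N) ≃ N) : ℕ → List O
  | 0 => []
  | k + 1 =>
    let prev := sdAux q R π k
    if hk : k < Fintype.card N then
      prev ++ [Pref.best (R (π ⟨k, hk⟩)) (Finset.univ.filter fun x => prev.count x < q x)]
    else prev

/-- Serial dictatorship outcome as an assignment function: each agent, in order of the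
priority `π`, picks their most preferred object with remaining capacity. -/
noncomputable def sd {N O : Type} [Fintype N] [Fintype O] [Nonempty O]
    (q : O → ℕ) (R : N → Pref O) (π : Fin (Fintype.card N) ≃ N) : N → O :=
  fun i => (sdAux q R π ((π.symm i).val + 1)).getD (π.symm i).val (Classical.arbitrary O)

/-- Random Priority: probability of assignment `μ` at profile `R`. -/
noncomputable def RPprob {N O : Type} [Fintype N] [Fintype O] [Nonempty O]
    (q : O → ℕ) (R : N → Pref O) (μ : Assignment N O q) : ℝ :=
  ((Finset.univ.filter fun π : Fin (Fintype.card N) ≃ N => sd q R π = μ.toFun).card : ℝ) /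
    (Nat.factorial (Fintype.card N))

/-- Equal-treatment-of-equals for a lottery over assignments. -/
def ETE {N O : Type} [Fintype N] [Fintype O] {q : O → ℕ}
    (R : N → Pref O) (p : Lottery N O q) : Prop :=
  ∀ i j, R i = R j → ∀ μ ν : Assignment N O q,
    μ.toFun i = ν.toFun j → μ.toFun j = ν.toFun i →
    (∀ k, k ≠ i → k ≠ j → μ.toFun k = ν.toFun k) → p.prob μ = p.prob ν

/-- Upper assignment invariance. -/
def UpperAssignInv {N O : Type} [Fintype N] [Fintype O] {q : O → ℕ}
    (f : (N → Pref O) → Lottery N O q) : Prop :=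
  ∀ (i : N) (R : N → Pref O) (Ri' : Pref O) (x y : O), IsAdjSwap (R i) Ri' x y →
    ∀ μ : Assignment N O q, (R i).pref (μ.toFun i) x →
      (f (Function.update R i Ri')).prob μ = (f R).prob μ

/-- Lower assignment invariance. -/
def LowerAssignInv {N O : Type} [Fintype N] [Fintype O] {q : O → ℕ}
    (f : (N → Pref O) → Lottery N O q) : Prop :=
  ∀ (i : N) (R : N → Pref O) (Ri' : Pref O) (x y : O), IsAdjSwap (R i) Ri' x y →
    ∀ μ : Assignment N O q, (R i).pref y (μ.toFun i) →
      (f (Function.update R i Ri')).prob μ = (f R).prob μ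

/-- Assignment swap monotonicity. -/
def AssignSwapMono {N O : Type} [Fintype N] [Fintype O] {q : O → ℕ}
    (f : (N → Pref O) → Lottery N O q) : Prop :=
  ∀ (i : N) (R : N → Pref O) (Ri' : Pref O) (x y : O), IsAdjSwap (R i) Ri' x y →
    (∀ μ : Assignment N O q, μ.toFun i = y →
        (f R).prob μ ≤ (f (Function.update R i Ri')).prob μ) ∧
    ((∀ μ : Assignment N O q, μ.toFun i = y →
        (f (Function.update R i Ri')).prob μ = (f R).prob μ) →
      ∀ μ : Assignment N O q, (f (Function.update R i Ri')).prob μ = (f R).prob μ)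

/-- Pairwise responsiveness. -/
def PairwiseResp {N O : Type} [Fintype N] [Fintype O] {q : O → ℕ}
    (f : (N → Pref O) → Lottery N O q) : Prop :=
  ∀ (i : N) (R : N → Pref O) (Ri' : Pref O) (x y : O), IsAdjSwap (R i) Ri' x y →
    ∀ μ : Assignment N O q, μ.toFun i ≠ x → μ.toFun i ≠ y →
      (f (Function.update R i Ri')).prob μ = (f R).prob μ


section Aux
open scoped Classical

lemma pref_best_exists {O : Type} (R : Pref O) (S : Finset O) (hS : S.Nonempty) :
    ∃ x ∈ S, ∀ y ∈ S, y ≠ x → R.pref x y := by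
  classical
  induction S using Finset.induction with
  | empty => exact absurd hS (by simp)
  | @insert a S ha ih =>
    rcases S.eq_empty_or_nonempty with rfl | hS'
    · exact ⟨a, by simp, by simp⟩
    · obtain ⟨x, hx, hxb⟩ := ih hS'
      have hax : a ≠ x := fun hh => ha (hh ▸ hx)
      rcases R.total a x hax with hp | hp
      · refine ⟨a, Finset.mem_insert_self a S, ?_⟩
        intro y hy hya
        rcases Finset.mem_insert.mp hy with rfl | hyS
        · exact absurd rfl hya
        · by_cases hyx : y = x
          · exact hyx ▸ hp
          · exact R.trans hp (hxb y hyS hyx)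
      · refine ⟨x, Finset.mem_insert_of_mem hx, ?_⟩
        intro y hy hyx
        rcases Finset.mem_insert.mp hy with rfl | hyS
        · exact hp
        · exact hxb y hyS hyx

lemma pref_best_unique {O : Type} [Nonempty O] (R : Pref O) (S : Finset O)
    (z : O) (hz : z ∈ S) (hzb : ∀ y ∈ S, y ≠ z → R.pref z y) :
    R.best S = z := by
  have hex : ∃ x ∈ S, ∀ y ∈ S, y ≠ x → R.pref x y := ⟨z, hz, hzb⟩
  rw [Pref.best, dif_pos hex]
  obtain ⟨hb, hbb⟩ := hex.choose_spec
  by_contra hne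
  exact R.irrefl _ (R.trans (hbb z hz (Ne.symm hne)) (hzb _ hb hne))

lemma list_sum_count {O : Type} [Fintype O] (l : List O) :
    ∑ x : O, l.count x = l.length := by
  induction l with
  | nil => simp
  | cons a l ih => simp [List.count_cons, Finset.sum_add_distrib, ih, add_comm]

lemma sdAux_length {N O : Type} [Fintype N] [Fintype O] [Nonempty O]
    (q : O → ℕ) (R : N → Pref O) (π : Fin (Fintype.card N) ≃ N) (k : ℕ) :
    (sdAux q R π k).length = min k (Fintype.card N) := by
  induction k with
  | zero => simp [sdAux]
  | succ k ih =>
    by_cases hk : k < Fintype.card N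
    · rw [sdAux, dif_pos hk]
      simp only [List.length_append, List.length_singleton, ih]
      omega
    · rw [sdAux, dif_neg hk, ih]
      omega

lemma sdAux_eq {N O : Type} [Fintype N] [Fintype O] [Nonempty O]
    (q : O → ℕ) (hq : Fintype.card N ≤ ∑ x, q x)
    (π : Fin (Fintype.card N) ≃ N)
    (R R' : N → Pref O) (μ : Assignment N O q)
    (hμ : sd q R π = μ.toFun) (h : MonTransf R R' μ.toFun) :
    ∀ k, k ≤ Fintype.card N → sdAux q R' π k = sdAux q R π k := by
  intro k
  induction k with
  | zero => intro _; rfl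
  | succ k ih =>
    intro hk1
    have hk : k < Fintype.card N := hk1
    have hprev := ih (le_of_lt hk)
    rw [sdAux, sdAux, dif_pos hk, dif_pos hk, hprev]
    set prev := sdAux q R π k with hprevdef
    set i := π ⟨k, hk⟩ with hidef
    set S := Finset.univ.filter (fun x => prev.count x < q x) with hSdef
    have hlen : prev.length = k := by
      rw [hprevdef, sdAux_length]; omega
    -- S is nonempty
    have hSne : S.Nonempty := by
      by_contra hne
      rw [Finset.not_nonempty_iff_eq_empty, Finset.filter_eq_empty_iff] at hne
      have hall : ∀ x : O, q x ≤ prev.count x := by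
        intro x
        have := hne (Finset.mem_univ x)
        omega
      have : ∑ x : O, q x ≤ ∑ x : O, prev.count x := Finset.sum_le_sum (fun x _ => hall x)
      rw [list_sum_count, hlen] at this
      omega
    -- μ i is the best for R i on S
    have hbestR : (R i).best S = μ.toFun i := by
      have : sd q R π i = μ.toFun i := by rw [hμ]
      rw [sd] at this
      have hsymm : π.symm i = ⟨k, hk⟩ := by rw [hidef, Equiv.symm_apply_apply]
      rw [hsymm] at this
      simp only at this
      rw [sdAux, dif_pos hk, ← hprevdef, ← hSdef] at this
      rw [List.getD_append_right _ _ _ _ hlen.le, hlen, Nat.sub_self] at this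
      simpa using this
    obtain ⟨hbmem, hbbest⟩ : (R i).best S ∈ S ∧ ∀ y ∈ S, y ≠ (R i).best S → (R i).pref ((R i).best S) y := by
      have hex := pref_best_exists (R i) S hSne
      rw [Pref.best, dif_pos hex]
      exact ⟨hex.choose_spec.1, hex.choose_spec.2⟩
    rw [hbestR] at hbmem hbbest
    -- μ i is also best for R' i on S
    have hbestR' : (R' i).best S = μ.toFun i := by
      apply pref_best_unique
      · exact hbmem
      · intro y hy hyne
        rcases (R' i).total (μ.toFun i) y (Ne.symm hyne) with hp | hp
        · exact hp
        · exact absurd ((R i).trans (hbbest y hy hyne) (h i y hp)) ((R i).irrefl _)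
    rw [hbestR', hbestR]

end Aux

/-- every serial dictatorship satisfies Maskin monotonicity. -/
theorem stmt2 {N O : Type} [Fintype N] [Fintype O] [Nonempty O]
    (q : O → ℕ) (hq : Fintype.card N ≤ ∑ x, q x)
    (π : Fin (Fintype.card N) ≃ N)
    (R R' : N → Pref O) (μ : Assignment N O q)
    (hμ : sd q R π = μ.toFun) (h : MonTransf R R' μ.toFun) :
    sd q R' π = μ.toFun := by
  have key := sdAux_eq q hq π R R' μ hμ h
  funext i
  have hk : (π.symm i).val < Fintype.card N := (π.symm i).isLt
  rw [sd, key _ (by omega)]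
  have : sd q R π i = μ.toFun i := by rw [hμ]
  rw [sd] at this
  exact this
end

section
/- The Random Priority rule RP, defined as the uniform average over all |N|! serial dictatorships, satisfies probabilistic monotonicity: for any profiles R, R' and assignment μ such that R' is a μ-monotonic transformation of R, the probability of μ under RP(R') is at least that under RP(R). -/
open Finset
open scoped Classical

private lemma exists_best {O : Type} (R : Pref O) {S : Finset O} (hS : S.Nonempty) :
    ∃ x ∈ S, ∀ y ∈ S, y ≠ x → R.pref x y := by
  induction hS using Finset.Nonempty.cons_induction with
  | singleton a => exact ⟨a, by simp, by simp⟩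
  | cons a s ha hs ih =>
    obtain ⟨x, hxS, hx⟩ := ih
    have hax : a ≠ x := fun h => ha (h ▸ hxS)
    rcases R.total a x hax with hp | hp
    · refine ⟨a, by simp, ?_⟩
      intro y hy hya
      rcases Finset.mem_cons.mp hy with rfl | hy'
      · exact absurd rfl hya
      · by_cases hyx : y = x
        · exact hyx ▸ hp
        · exact R.trans hp (hx y hy' hyx)
    · refine ⟨x, Finset.mem_cons.mpr (Or.inr hxS), ?_⟩
      intro y hy hyx
      rcases Finset.mem_cons.mp hy with rfl | hy'
      · exact hp
      · exact hx y hy' hyx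

private lemma count_ofFn {O : Type} [DecidableEq O] :
    ∀ {k : ℕ} (f : Fin k → O) (x : O),
    (List.ofFn f).count x = (Finset.univ.filter fun j => f j = x).card
  | 0, f, x => by simp
  | k+1, f, x => by
    rw [List.ofFn_succ', List.concat_eq_append, List.count_append,
      count_ofFn (fun j => f (Fin.castSucc j)) x, Finset.card_filter]
    rw [Finset.card_filter, Fin.sum_univ_castSucc]
    simp [List.count_singleton', eq_comm]

private lemma best_spec {O : Type} [Nonempty O] (R : Pref O) {S : Finset O} (hS : S.Nonempty) :
    Pref.best R S ∈ S ∧ ∀ y ∈ S, y ≠ Pref.best R S → R.pref (Pref.best R S) y := by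
  have h : ∃ x ∈ S, ∀ y ∈ S, y ≠ x → R.pref x y := exists_best R hS
  rw [Pref.best, dif_pos h]
  exact ⟨h.choose_spec.1, h.choose_spec.2⟩

private lemma sd_mono {N O : Type} [Fintype N] [Fintype O] [Nonempty O]
    (q : O → ℕ) (R R' : N → Pref O) (μ : Assignment N O q)
    (h : MonTransf R R' μ.toFun) (π : Fin (Fintype.card N) ≃ N)
    (hsd : sd q R π = μ.toFun) : sd q R' π = μ.toFun := by
  have key : ∀ k (hk : k ≤ Fintype.card N),
      sdAux q R π k = List.ofFn (fun j : Fin k => μ.toFun (π (Fin.castLE hk j))) ∧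
      sdAux q R' π k = sdAux q R π k := by
    intro k
    induction k with
    | zero => intro _; simp [sdAux]
    | succ k ih =>
      intro hk1
      have hk : k < Fintype.card N := hk1
      obtain ⟨h1, h2⟩ := ih (le_of_lt hk)
      set i : N := π ⟨k, hk⟩ with hi
      set prev := sdAux q R π k with hprev
      have hlen : prev.length = k := by rw [h1]; simp
      set S : Finset O := Finset.univ.filter fun x => prev.count x < q x with hSdef
      -- μ i is available
      have hμS : μ.toFun i ∈ S := by
        rw [hSdef, Finset.mem_filter]
        refine ⟨Finset.mem_univ _, ?_⟩
        rw [h1, count_ofFn]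
        have hinj : ∀ j ∈ (Finset.univ.filter fun j : Fin k =>
            μ.toFun (π (Fin.castLE (le_of_lt hk) j)) = μ.toFun i),
            π (Fin.castLE (le_of_lt hk) j) ∈
              (Finset.univ.filter fun a => μ.toFun a = μ.toFun i).erase i := by
          intro j hj
          rw [Finset.mem_filter] at hj
          refine Finset.mem_erase.mpr ⟨?_, Finset.mem_filter.mpr ⟨Finset.mem_univ _, hj.2⟩⟩
          intro hcon
          have := π.injective hcon
          have : (j : ℕ) = k := congrArg Fin.val this
          exact absurd this (Nat.ne_of_lt j.isLt)
        have hcard := Finset.card_le_card_of_injOn _ hinj ?inj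
        case inj =>
          intro a _ b _ hab
          exact Fin.castLE_injective _ (π.injective hab)
        have hie : i ∈ Finset.univ.filter fun a => μ.toFun a = μ.toFun i := by
          simp
        have herase := Finset.card_erase_of_mem hie
        have hcap := μ.capacity (μ.toFun i)
        have hpos : 1 ≤ (Finset.univ.filter fun a => μ.toFun a = μ.toFun i).card :=
          Finset.card_pos.mpr ⟨i, hie⟩
        omega
      have hSne : S.Nonempty := ⟨_, hμS⟩
      -- the chosen object under R at step k equals μ i
      have eR : sdAux q R π (k + 1) = prev ++ [Pref.best (R i) S] := by
        rw [sdAux, dif_pos hk]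
      have eR' : sdAux q R' π (k + 1) = prev ++ [Pref.best (R' i) S] := by
        rw [sdAux, dif_pos hk, h2]
      have hbR : Pref.best (R i) S = μ.toFun i := by
        have := congrFun hsd i
        rw [sd] at this
        have hsymm : π.symm i = ⟨k, hk⟩ := by rw [hi]; simp
        rw [hsymm] at this
        simp only at this
        rw [eR] at this
        rwa [List.getD_append_right _ _ _ _ (le_of_eq hlen), hlen,
          Nat.sub_self, List.getD] at this
      -- best under R' also equals μ i
      have hbR' : Pref.best (R' i) S = μ.toFun i := by
        by_contra hne
        obtain ⟨hb'S, hb'⟩ := best_spec (R' i) hSne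
        obtain ⟨hbS, hb⟩ := best_spec (R i) hSne
        have h1' : (R' i).pref (Pref.best (R' i) S) (μ.toFun i) :=
          hb' _ hμS (fun hc => hne hc.symm)
        have h2' : (R i).pref (Pref.best (R' i) S) (μ.toFun i) := h i _ h1'
        have h3' : (R i).pref (μ.toFun i) (Pref.best (R' i) S) := by
          have := hb _ hb'S
          rw [hbR] at this
          exact this hne
        exact (R i).irrefl _ ((R i).trans h2' h3')
      constructor
      · rw [eR, hbR, List.ofFn_succ', List.concat_eq_append, h1]
        rfl
      · rw [eR, eR', hbR, hbR']
  funext j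
  set k : Fin (Fintype.card N) := π.symm j with hkdef
  have hk1 : (k : ℕ) + 1 ≤ Fintype.card N := k.isLt
  obtain ⟨h1, h2⟩ := key ((k : ℕ) + 1) hk1
  rw [sd, ← hkdef, h2, h1, List.getD_eq_getElem _ _ (by simp), List.getElem_ofFn]
  have : Fin.castLE hk1 ⟨(k : ℕ), Nat.lt_succ_self _⟩ = k := Fin.ext rfl
  rw [this, hkdef]
  simp

/-- Random Priority satisfies probabilistic monotonicity. -/
theorem stmt3 {N O : Type} [Fintype N] [Fintype O] [Nonempty O]
    (q : O → ℕ) (R R' : N → Pref O) (μ : Assignment N O q)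
    (h : MonTransf R R' μ.toFun) :
    RPprob q R μ ≤ RPprob q R' μ := by
  rw [RPprob, RPprob]
  have hfac : (0:ℝ) < ((Fintype.card N).factorial : ℝ) := by
    exact_mod_cast (Fintype.card N).factorial_pos
  refine (div_le_div_iff_of_pos_right hfac).mpr ?_
  exact_mod_cast Finset.card_le_card (fun π hπ => by
    simp only [Finset.mem_filter, Finset.mem_univ, true_and] at *
    exact sd_mono q R R' μ h π hπ)
end

section
/- A random assignment rule satisfies probabilistic monotonicity if and only if it satisfies assignment swap monotonicity, upper assignment invariance, and lower assignment invariance. -/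
open Finset
open scoped Classical

lemma pref_asymm {O : Type} (P : Pref O) {x y : O} (h : P.pref x y) : ¬ P.pref y x :=
  fun h' => P.irrefl x (P.trans h h')

lemma pref_ne {O : Type} (P : Pref O) {x y : O} (h : P.pref x y) : x ≠ y := by
  rintro rfl; exact P.irrefl x h

lemma pref_ext' {O : Type} {P P' : Pref O} (h : P.pref = P'.pref) : P = P' := by
  cases P; cases P'; cases h; rfl

/-- swap of two adjacent objects -/
noncomputable def swapPref {O : Type} (P : Pref O) (x y : O) (hxy : x ≠ y)
    (hP : P.pref x y) (hadj : ∀ z, ¬ (P.pref x z ∧ P.pref z y)) : Pref O where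
  pref a b := (P.pref a b ∧ ¬ (a = x ∧ b = y)) ∨ (a = y ∧ b = x)
  irrefl a := by
    rintro (⟨h, _⟩ | ⟨h1, h2⟩)
    · exact P.irrefl a h
    · exact hxy (h2.symm.trans h1)
  trans := by
    rintro a b c (⟨hab, hne⟩ | ⟨hb1, hb2⟩) (⟨hbc, hne'⟩ | ⟨hc1, hc2⟩)
    · left
      refine ⟨P.trans hab hbc, ?_⟩
      rintro ⟨rfl, rfl⟩
      exact hadj b ⟨hab, hbc⟩
    · -- b = y, c = x; have P a y, a ≠ x
      rw [hc2]; rw [hc1] at hab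
      have hax : a ≠ x := by rintro rfl; exact hne ⟨rfl, hc1⟩
      left
      refine ⟨?_, fun h => hax h.1⟩
      rcases P.total a x hax with h | h
      · exact h
      · exact absurd ⟨h, hab⟩ (hadj a)
    · -- a = y, b = x, P x c, c ≠ y
      rw [hb1]; rw [hb2] at hbc
      have hcy : c ≠ y := fun h => hne' ⟨hb2, h⟩
      left
      refine ⟨?_, fun h => hxy h.1.symm⟩
      rcases P.total y c (Ne.symm hcy) with h | h
      · exact h
      · exact absurd ⟨hbc, h⟩ (hadj c)
    · exact absurd (hc1.symm.trans hb2) (Ne.symm hxy)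
  total a b hab := by
    by_cases h1 : a = x ∧ b = y
    · right; right; exact ⟨h1.2, h1.1⟩
    · by_cases h2 : b = x ∧ a = y
      · left; right; exact ⟨h2.2, h2.1⟩
      · rcases P.total a b hab with h | h
        · exact Or.inl (Or.inl ⟨h, h1⟩)
        · exact Or.inr (Or.inl ⟨h, h2⟩)

lemma swapPref_pref_iff {O : Type} (P : Pref O) (x y : O) (hxy : x ≠ y)
    (hP : P.pref x y) (hadj : ∀ z, ¬ (P.pref x z ∧ P.pref z y)) (a b : O) :
    (swapPref P x y hxy hP hadj).pref a b ↔
      (P.pref a b ∧ ¬ (a = x ∧ b = y)) ∨ (a = y ∧ b = x) := Iff.rfl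

lemma isAdjSwap_swapPref {O : Type} (P : Pref O) (x y : O) (hxy : x ≠ y)
    (hP : P.pref x y) (hadj : ∀ z, ¬ (P.pref x z ∧ P.pref z y)) :
    IsAdjSwap P (swapPref P x y hxy hP hadj) x y := by
  refine ⟨hxy, hP, Or.inr ⟨rfl, rfl⟩, ?_, ?_, ?_⟩
  · intro a b ha hb
    constructor
    · intro h; exact Or.inl ⟨h, fun hh => ha hh.1⟩
    · rintro (⟨h, _⟩ | ⟨h1, h2⟩)
      · exact h
      · exact absurd h2 hb
  · intro a b ha hb
    constructor
    · intro h; exact Or.inl ⟨h, fun hh => hb hh.2⟩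
    · rintro (⟨h, _⟩ | ⟨h1, h2⟩)
      · exact h
      · exact absurd h1 ha
  · intro a hax hay
    constructor
    · intro h; exact P.trans h hP
    · intro h
      rcases P.total a x hax with h' | h'
      · exact h'
      · exact absurd ⟨h', h⟩ (hadj a)

/-- the set of inversions between two preferences -/
noncomputable def invSet {O : Type} [Fintype O] (P P' : Pref O) : Finset (O × O) :=
  Finset.univ.filter fun p => P.pref p.1 p.2 ∧ P'.pref p.2 p.1

lemma invSet_empty_eq {O : Type} [Fintype O] {P P' : Pref O}
    (h : invSet P P' = ∅) : P = P' := by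
  have key : ∀ a b, P.pref a b → P'.pref a b := by
    intro a b hab
    have hnab : (a, b) ∉ invSet P P' := by rw [h]; exact Finset.notMem_empty _
    simp only [invSet, Finset.mem_filter, Finset.mem_univ, true_and] at hnab
    rcases P'.total a b (pref_ne P hab) with h' | h'
    · exact h'
    · exact absurd ⟨hab, h'⟩ hnab
  apply pref_ext'
  funext a b
  apply propext
  constructor
  · exact key a b
  · intro hab
    by_contra hn
    rcases P.total a b (pref_ne P' hab) with h' | h'
    · exact hn h'
    · exact pref_asymm P' hab (key b a h')

/-- between set -/
noncomputable def betw {O : Type} [Fintype O] (P : Pref O) (x y : O) : Finset O :=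
  Finset.univ.filter fun z => P.pref x z ∧ P.pref z y

/-- existence of an adjacent inversion -/
lemma exists_adj_inversion {O : Type} [Fintype O] {P P' : Pref O}
    (h : (invSet P P').Nonempty) :
    ∃ x y, P.pref x y ∧ P'.pref y x ∧ ∀ z, ¬ (P.pref x z ∧ P.pref z y) := by
  obtain ⟨p, hp, hmin⟩ := Finset.exists_min_image (invSet P P')
    (fun p => (betw P p.1 p.2).card) h
  obtain ⟨x, y⟩ := p
  simp only [invSet, Finset.mem_filter, Finset.mem_univ, true_and] at hp
  refine ⟨x, y, hp.1, hp.2, ?_⟩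
  rintro z ⟨hxz, hzy⟩
  have hzx : z ≠ x := Ne.symm (pref_ne P hxz)
  have hzy' : z ≠ y := pref_ne P hzy
  by_cases hc : P'.pref z x
  · -- (x, z) is an inversion with smaller betw
    have hmem : (x, z) ∈ invSet P P' := by
      simp only [invSet, Finset.mem_filter, Finset.mem_univ, true_and]
      exact ⟨hxz, hc⟩
    have hlt : (betw P x z).card < (betw P x y).card := by
      apply Finset.card_lt_card
      constructor
      · intro w hw
        simp only [betw, Finset.mem_filter, Finset.mem_univ, true_and] at hw ⊢
        exact ⟨hw.1, P.trans hw.2 hzy⟩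
      · intro hsub
        have : z ∈ betw P x y := by
          simp only [betw, Finset.mem_filter, Finset.mem_univ, true_and]
          exact ⟨hxz, hzy⟩
        have := hsub this
        simp only [betw, Finset.mem_filter, Finset.mem_univ, true_and] at this
        exact P.irrefl z this.2
    exact absurd (hmin _ hmem) (not_le_of_gt hlt)
  · have hxz' : P'.pref x z := by
      rcases P'.total x z (Ne.symm hzx) with h' | h'
      · exact h'
      · exact absurd h' hc
    have hmem : (z, y) ∈ invSet P P' := by
      simp only [invSet, Finset.mem_filter, Finset.mem_univ, true_and]
      exact ⟨hzy, P'.trans hp.2 hxz'⟩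
    have hlt : (betw P z y).card < (betw P x y).card := by
      apply Finset.card_lt_card
      constructor
      · intro w hw
        simp only [betw, Finset.mem_filter, Finset.mem_univ, true_and] at hw ⊢
        exact ⟨P.trans hxz hw.1, hw.2⟩
      · intro hsub
        have : z ∈ betw P x y := by
          simp only [betw, Finset.mem_filter, Finset.mem_univ, true_and]
          exact ⟨hxz, hzy⟩
        have := hsub this
        simp only [betw, Finset.mem_filter, Finset.mem_univ, true_and] at this
        exact P.irrefl z this.1
    exact absurd (hmin _ hmem) (not_le_of_gt hlt)

lemma invSet_swap {O : Type} [Fintype O] (P P' : Pref O) (x y : O) (hxy : x ≠ y)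
    (hP : P.pref x y) (hadj : ∀ z, ¬ (P.pref x z ∧ P.pref z y)) (hinv : P'.pref y x) :
    invSet (swapPref P x y hxy hP hadj) P' = (invSet P P').erase (x, y) := by
  ext ⟨a, b⟩
  simp only [invSet, Finset.mem_erase, Finset.mem_filter, Finset.mem_univ, true_and,
    swapPref_pref_iff, Prod.mk.injEq]
  constructor
  · rintro ⟨(⟨hab, hne⟩ | ⟨h1, h2⟩), hba⟩
    · exact ⟨fun hh => hne ⟨congrArg Prod.fst hh, congrArg Prod.snd hh⟩, hab, hba⟩
    · rw [h1, h2] at hba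
      exact absurd hba (pref_asymm P' hinv)
  · rintro ⟨hne, hab, hba⟩
    exact ⟨Or.inl ⟨hab, fun hh => hne (by rw [hh.1, hh.2])⟩, hba⟩

section Main

variable {N O : Type} [Fintype N] [Fintype O] {q : O → ℕ}

lemma outside_iff {P P' : Pref O} {x y : O} (hs : IsAdjSwap P P' x y)
    (a : O) (hax : a ≠ x) (hay : a ≠ y) : ∀ z, P.pref z a ↔ P'.pref z a := by
  obtain ⟨hxy, hPxy, hP'yx, c4, c5, c6⟩ := hs
  intro z
  by_cases hz : z = x
  · subst hz; exact c5 z a hxy hay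
  · exact c4 z a hz hax

lemma monTransf_update (R : N → Pref O) (i : N) (Ri' : Pref O) (m : N → O)
    (h : ∀ z, Ri'.pref z (m i) → (R i).pref z (m i)) :
    MonTransf R (Function.update R i Ri') m := by
  intro j z
  by_cases hj : j = i
  · subst hj; rw [Function.update_self]; exact h z
  · rw [Function.update_of_ne hj]; exact id

lemma monTransf_update_rev (R : N → Pref O) (i : N) (Ri' : Pref O) (m : N → O)
    (h : ∀ z, (R i).pref z (m i) → Ri'.pref z (m i)) :
    MonTransf (Function.update R i Ri') R m := by
  intro j z
  by_cases hj : j = i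
  · subst hj; rw [Function.update_self]; exact h z
  · rw [Function.update_of_ne hj]; exact id

/-! ### Forward direction -/

lemma probMono_outside_eq {f : (N → Pref O) → Lottery N O q} (hPM : ProbMono f)
    (i : N) (R : N → Pref O) (Ri' : Pref O) (x y : O) (hs : IsAdjSwap (R i) Ri' x y)
    (μ : Assignment N O q) (hax : μ.toFun i ≠ x) (hay : μ.toFun i ≠ y) :
    (f (Function.update R i Ri')).prob μ = (f R).prob μ := by
  have hiff := outside_iff hs (μ.toFun i) hax hay
  refine le_antisymm ?_ ?_
  · exact hPM _ _ μ (monTransf_update_rev R i Ri' μ.toFun fun z => (hiff z).mp)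
  · exact hPM _ _ μ (monTransf_update R i Ri' μ.toFun fun z => (hiff z).mpr)

lemma probMono_y_le {f : (N → Pref O) → Lottery N O q} (hPM : ProbMono f)
    (i : N) (R : N → Pref O) (Ri' : Pref O) (x y : O) (hs : IsAdjSwap (R i) Ri' x y)
    (μ : Assignment N O q) (hy : μ.toFun i = y) :
    (f R).prob μ ≤ (f (Function.update R i Ri')).prob μ := by
  obtain ⟨hxy, hPxy, hP'yx, c4, c5, c6⟩ := hs
  apply hPM
  apply monTransf_update
  rw [hy]
  intro z hz
  have hzx : z ≠ x := by rintro rfl; exact pref_asymm Ri' hP'yx hz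
  exact (c4 z y hzx (Ne.symm hxy)).mpr hz

lemma probMono_x_ge {f : (N → Pref O) → Lottery N O q} (hPM : ProbMono f)
    (i : N) (R : N → Pref O) (Ri' : Pref O) (x y : O) (hs : IsAdjSwap (R i) Ri' x y)
    (μ : Assignment N O q) (hx : μ.toFun i = x) :
    (f (Function.update R i Ri')).prob μ ≤ (f R).prob μ := by
  obtain ⟨hxy, hPxy, hP'yx, c4, c5, c6⟩ := hs
  apply hPM
  apply monTransf_update_rev
  rw [hx]
  intro z hz
  have hzy : z ≠ y := by rintro rfl; exact pref_asymm (R i) hPxy hz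
  exact (c5 z x hzy hxy).mp hz

lemma forward_UAI {f : (N → Pref O) → Lottery N O q} (hPM : ProbMono f) :
    UpperAssignInv f := by
  intro i R Ri' x y hs μ hpref
  have hax : μ.toFun i ≠ x := pref_ne (R i) hpref
  have hay : μ.toFun i ≠ y := pref_ne (R i) ((R i).trans hpref hs.2.1)
  exact probMono_outside_eq hPM i R Ri' x y hs μ hax hay

lemma forward_LAI {f : (N → Pref O) → Lottery N O q} (hPM : ProbMono f) :
    LowerAssignInv f := by
  intro i R Ri' x y hs μ hpref
  have hay : μ.toFun i ≠ y := Ne.symm (pref_ne (R i) hpref)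
  have hax : μ.toFun i ≠ x := Ne.symm (pref_ne (R i) ((R i).trans hs.2.1 hpref))
  exact probMono_outside_eq hPM i R Ri' x y hs μ hax hay

lemma forward_ASM {f : (N → Pref O) → Lottery N O q} (hPM : ProbMono f) :
    AssignSwapMono f := by
  intro i R Ri' x y hs
  constructor
  · exact fun μ hy => probMono_y_le hPM i R Ri' x y hs μ hy
  · intro hEq μ
    -- first: equality for all assignments with i-th object ≠ x
    have hne_eq : ∀ ν : Assignment N O q, ν.toFun i ≠ x →
        (f (Function.update R i Ri')).prob ν = (f R).prob ν := by
      intro ν hνx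
      by_cases hνy : ν.toFun i = y
      · exact hEq ν hνy
      · exact probMono_outside_eq hPM i R Ri' x y hs ν hνx hνy
    by_cases hx : μ.toFun i = x
    · -- sum argument
      set g : Assignment N O q → ℝ :=
        fun ν => (f R).prob ν - (f (Function.update R i Ri')).prob ν with hg
      have hsum : ∑ ν, g ν = 0 := by
        rw [Finset.sum_sub_distrib, (f R).sum_one, (f (Function.update R i Ri')).sum_one]
        ring
      have hsplit := Finset.sum_filter_add_sum_filter_not Finset.univ
        (fun ν : Assignment N O q => ν.toFun i = x) g
      have hzero2 : ∑ ν ∈ Finset.univ.filter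
          (fun ν : Assignment N O q => ¬ ν.toFun i = x), g ν = 0 := by
        apply Finset.sum_eq_zero
        intro ν hν
        simp only [Finset.mem_filter, Finset.mem_univ, true_and] at hν
        simp only [hg]
        rw [hne_eq ν hν]
        ring
      have hzero1 : ∑ ν ∈ Finset.univ.filter
          (fun ν : Assignment N O q => ν.toFun i = x), g ν = 0 := by
        have := hsplit
        rw [hsum, hzero2] at this
        linarith
      have hnn : ∀ ν ∈ Finset.univ.filter
          (fun ν : Assignment N O q => ν.toFun i = x), 0 ≤ g ν := by
        intro ν hν
        simp only [Finset.mem_filter, Finset.mem_univ, true_and] at hν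
        have := probMono_x_ge hPM i R Ri' x y hs ν hν
        simp only [hg]
        linarith
      have hall := (Finset.sum_eq_zero_iff_of_nonneg hnn).mp hzero1
      have hμ : μ ∈ Finset.univ.filter
          (fun ν : Assignment N O q => ν.toFun i = x) := by
        simp only [Finset.mem_filter, Finset.mem_univ, true_and]; exact hx
      have := hall μ hμ
      simp only [hg] at this
      linarith
    · exact hne_eq μ hx

/-! ### Backward direction -/

lemma step_le {f : (N → Pref O) → Lottery N O q}
    (hA : AssignSwapMono f) (hU : UpperAssignInv f) (hL : LowerAssignInv f)
    (i : N) (R : N → Pref O) (Ri' : Pref O) (x y : O) (hs : IsAdjSwap (R i) Ri' x y)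
    (μ : Assignment N O q) (hne : μ.toFun i ≠ x) :
    (f R).prob μ ≤ (f (Function.update R i Ri')).prob μ := by
  by_cases hy : μ.toFun i = y
  · exact (hA i R Ri' x y hs).1 μ hy
  · by_cases hx : (R i).pref (μ.toFun i) x
    · exact le_of_eq (hU i R Ri' x y hs μ hx).symm
    · have hyμ : (R i).pref y (μ.toFun i) := by
        have h6 := hs.2.2.2.2.2 (μ.toFun i) hne hy
        have : ¬ (R i).pref (μ.toFun i) y := fun h => hx (h6.mpr h)
        rcases (R i).total y (μ.toFun i) (Ne.symm hy) with h | h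
        · exact h
        · exact absurd h this
      exact le_of_eq (hL i R Ri' x y hs μ hyμ).symm

lemma single_le {f : (N → Pref O) → Lottery N O q}
    (hA : AssignSwapMono f) (hU : UpperAssignInv f) (hL : LowerAssignInv f)
    (i : N) (μ : Assignment N O q) :
    ∀ (n : ℕ) (R : N → Pref O) (Ri' : Pref O), (invSet (R i) Ri').card = n →
      (∀ z, Ri'.pref z (μ.toFun i) → (R i).pref z (μ.toFun i)) →
      (f R).prob μ ≤ (f (Function.update R i Ri')).prob μ := by
  intro n
  induction n using Nat.strong_induction_on with
  | _ n ih =>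
    intro R Ri' hcard hinv
    rcases Nat.eq_zero_or_pos n with hn | hn
    · have hempty : invSet (R i) Ri' = ∅ := by
        apply Finset.card_eq_zero.mp; rw [hcard, hn]
      have hRR : R i = Ri' := invSet_empty_eq hempty
      rw [← hRR, Function.update_eq_self]
    · have hne : (invSet (R i) Ri').Nonempty := by
        apply Finset.card_pos.mp; rw [hcard]; exact hn
      obtain ⟨x, y, hPxy, hP'yx, hadj⟩ := exists_adj_inversion hne
      have hxy : x ≠ y := pref_ne _ hPxy
      set Rsw := swapPref (R i) x y hxy hPxy hadj with hRswdef
      have hswap : IsAdjSwap (R i) Rsw x y := isAdjSwap_swapPref (R i) x y hxy hPxy hadj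
      have hxne : μ.toFun i ≠ x := by
        rintro h
        rw [← h] at hP'yx
        exact pref_asymm (R i) hPxy (h ▸ hinv y hP'yx)
      have h1 : (f R).prob μ ≤ (f (Function.update R i Rsw)).prob μ :=
        step_le hA hU hL i R Rsw x y hswap μ hxne
      have hupd : (Function.update R i Rsw) i = Rsw := Function.update_self i Rsw R
      have hset : invSet Rsw Ri' = (invSet (R i) Ri').erase (x, y) :=
        invSet_swap (R i) Ri' x y hxy hPxy hadj hP'yx
      have hmem : (x, y) ∈ invSet (R i) Ri' := by
        simp only [invSet, Finset.mem_filter, Finset.mem_univ, true_and]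
        exact ⟨hPxy, hP'yx⟩
      have hlt : (invSet ((Function.update R i Rsw) i) Ri').card < n := by
        rw [hupd, hset, ← hcard]
        exact Finset.card_erase_lt_of_mem hmem
      have hinv2 : ∀ z, Ri'.pref z (μ.toFun i) →
          ((Function.update R i Rsw) i).pref z (μ.toFun i) := by
        intro z hz
        rw [hupd]
        left
        refine ⟨hinv z hz, ?_⟩
        rintro ⟨rfl, h2⟩
        rw [h2] at hz
        exact pref_asymm Ri' hP'yx hz
      have h2 := ih _ hlt (Function.update R i Rsw) Ri' rfl hinv2
      rw [Function.update_idem] at h2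
      exact h1.trans h2

lemma multi_le {f : (N → Pref O) → Lottery N O q}
    (hA : AssignSwapMono f) (hU : UpperAssignInv f) (hL : LowerAssignInv f)
    (μ : Assignment N O q) :
    ∀ (s : Finset N) (R R' : N → Pref O), (∀ j, j ∉ s → R j = R' j) →
      MonTransf R R' μ.toFun → (f R).prob μ ≤ (f R').prob μ := by
  intro s
  induction s using Finset.induction_on with
  | empty =>
    intro R R' hout _
    have : R = R' := funext fun j => hout j (Finset.notMem_empty j)
    rw [this]
  | @insert a s ha ih =>
    intro R R' hout hmt
    have h1 : (f R).prob μ ≤ (f (Function.update R a (R' a))).prob μ :=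
      single_le hA hU hL a μ _ R (R' a) rfl (fun z hz => hmt a z hz)
    have h2 : (f (Function.update R a (R' a))).prob μ ≤ (f R').prob μ := by
      apply ih
      · intro j hj
        by_cases hja : j = a
        · rw [hja]; exact Function.update_self a (R' a) R
        · have hjout : j ∉ insert a s := by
            simp only [Finset.mem_insert]; push_neg; exact ⟨hja, hj⟩
          rw [Function.update_of_ne hja]; exact hout j hjout
      · intro j z hz
        by_cases hja : j = a
        · subst hja; rw [Function.update_self]; exact hz
        · rw [Function.update_of_ne hja]; exact hmt j z hz
    exact h1.trans h2

end Main

/-- probabilistic monotonicity ↔ assignment swap monotonicity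
∧ upper assignment invariance ∧ lower assignment invariance. -/
theorem stmt4 {N O : Type} [Fintype N] [Fintype O] {q : O → ℕ}
    (f : (N → Pref O) → Lottery N O q) :
    ProbMono f ↔ AssignSwapMono f ∧ UpperAssignInv f ∧ LowerAssignInv f := by
  constructor
  · intro hPM
    exact ⟨forward_ASM hPM, forward_UAI hPM, forward_LAI hPM⟩
  · rintro ⟨hA, hU, hL⟩
    intro R R' μ hmt
    exact multi_le hA hU hL μ Finset.univ R R'
      (fun j hj => absurd (Finset.mem_univ j) hj) hmt
end

section
/- Probabilistic monotonicity implies sd-strategy-proofness: if a random assignment rule f satisfies probabilistic monotonicity, then for every agent i, every profile R, and every alternative report R'_i, the individual random assignment f^i(R) stochastically R_i-dominates f^i(R'_i, R_{-i}). -/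
open Finset
open scoped Classical

/-- Combined preference: objects satisfying `P` on top ordered by `RU`,
the rest below ordered by `RL`. -/
noncomputable def combPref {O : Type} (RU RL : Pref O) (P : O → Prop) : Pref O where
  pref a b := (P a ∧ P b ∧ RU.pref a b) ∨ (P a ∧ ¬ P b) ∨ (¬ P a ∧ ¬ P b ∧ RL.pref a b)
  irrefl x := by
    rintro (⟨_, _, h⟩ | ⟨h1, h2⟩ | ⟨_, _, h⟩)
    · exact RU.irrefl x h
    · exact h2 h1
    · exact RL.irrefl x h
  trans := by
    rintro x y z (⟨hx, hy, h1⟩ | ⟨hx, hy⟩ | ⟨hx, hy, h1⟩)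
      (⟨hy', hz, h2⟩ | ⟨hy', hz⟩ | ⟨hy', hz, h2⟩) <;>
      first
        | exact Or.inl ⟨hx, hz, RU.trans h1 h2⟩
        | exact Or.inr (Or.inl ⟨hx, hz⟩)
        | exact Or.inr (Or.inr ⟨hx, hz, RL.trans h1 h2⟩)
        | exact absurd hy' hy
        | exact absurd hy hy'
  total x y hxy := by
    by_cases hx : P x <;> by_cases hy : P y
    · rcases RU.total x y hxy with h | h
      · exact Or.inl (Or.inl ⟨hx, hy, h⟩)
      · exact Or.inr (Or.inl ⟨hy, hx, h⟩)
    · exact Or.inl (Or.inr (Or.inl ⟨hx, hy⟩))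
    · exact Or.inr (Or.inr (Or.inl ⟨hy, hx⟩))
    · rcases RL.total x y hxy with h | h
      · exact Or.inl (Or.inr (Or.inr ⟨hx, hy, h⟩))
      · exact Or.inr (Or.inr (Or.inr ⟨hy, hx, h⟩))

lemma sum_margin_eq {N O : Type} [Fintype N] [Fintype O] {q : O → ℕ}
    (p : Lottery N O q) (i : N) (s : Finset O) :
    ∑ a ∈ s, margin p i a =
      ∑ μ ∈ Finset.univ.filter (fun μ : Assignment N O q => μ.toFun i ∈ s), p.prob μ := by
  unfold margin
  simp only [Finset.sum_filter]
  rw [Finset.sum_comm]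
  refine Finset.sum_congr rfl fun μ _ => ?_
  exact Finset.sum_ite_eq s (μ.toFun i) fun _ => p.prob μ

/-- probabilistic monotonicity implies sd-strategy-proofness. -/
theorem stmt5 {N O : Type} [Fintype N] [Fintype O] {q : O → ℕ}
    (f : (N → Pref O) → Lottery N O q) (h : ProbMono f) :
    ∀ (i : N) (R : N → Pref O) (Ri' : Pref O) (x : O),
      ∑ a ∈ Finset.univ.filter (fun a => (R i).wpref a x),
          margin (f (Function.update R i Ri')) i a ≤
        ∑ a ∈ Finset.univ.filter (fun a => (R i).wpref a x), margin (f R) i a := by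
  classical
  intro i R Ri' x
  set P : O → Prop := fun a => (R i).wpref a x with hP
  set Rstar : Pref O := combPref Ri' (R i) P with hRstar
  set R' : N → Pref O := Function.update R i Ri' with hR'
  set Rs : N → Pref O := Function.update R i Rstar with hRs
  -- key fact: if ¬ P a then x P_i a
  have hxPa : ∀ a, ¬ P a → (R i).pref x a := by
    intro a ha
    rcases (R i).total x a (fun hxa => ha (Or.inl hxa.symm)) with h | h
    · exact h
    · exact absurd (Or.inr h) ha
  -- if P y and ¬ P a then y P_i a
  have hPya : ∀ y a, P y → ¬ P a → (R i).pref y a := by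
    intro y a hy ha
    rcases hy with rfl | hy
    · exact hxPa a ha
    · exact (R i).trans hy (hxPa a ha)
  -- pointwise inequality on the upper set
  have key1 : ∀ μ : Assignment N O q, P (μ.toFun i) →
      (f R').prob μ ≤ (f Rs).prob μ := by
    intro μ hμ
    refine h R' Rs μ ?_
    intro j y hj
    by_cases hji : j = i
    · subst hji
      simp only [hRs, hR', Function.update_self] at hj ⊢
      rcases hj with ⟨_, _, hpr⟩ | ⟨_, hb⟩ | ⟨_, hb, _⟩
      · exact hpr
      · exact absurd hμ hb
      · exact absurd hμ hb
    · simpa only [hRs, hR', Function.update_of_ne hji] using hj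
  -- pointwise inequality on the lower set
  have key2 : ∀ μ : Assignment N O q, ¬ P (μ.toFun i) →
      (f R).prob μ ≤ (f Rs).prob μ := by
    intro μ hμ
    refine h R Rs μ ?_
    intro j y hj
    by_cases hji : j = i
    · subst hji
      simp only [hRs, Function.update_self] at hj
      rcases hj with ⟨_, hb, _⟩ | ⟨hy, _⟩ | ⟨_, _, hpr⟩
      · exact absurd hb hμ
      · exact hPya y _ hy hμ
      · exact hpr
    · simpa only [hRs, Function.update_of_ne hji] using hj
  -- translate margins to sums over assignments
  have hs : Finset.univ.filter (fun a => (R i).wpref a x) =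
      Finset.univ.filter (fun a => P a) := rfl
  rw [hs, sum_margin_eq, sum_margin_eq]
  have hmem : ∀ μ : Assignment N O q,
      (μ.toFun i ∈ Finset.univ.filter (fun a => P a)) ↔ P (μ.toFun i) := by
    intro μ; simp
  set S : Finset (Assignment N O q) :=
    Finset.univ.filter (fun μ => μ.toFun i ∈ Finset.univ.filter (fun a => P a)) with hS
  have hSmem : ∀ μ : Assignment N O q, μ ∈ S ↔ P (μ.toFun i) := by
    intro μ; simp [hS]
  have step1 : ∑ μ ∈ S, (f R').prob μ ≤ ∑ μ ∈ S, (f Rs).prob μ :=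
    Finset.sum_le_sum fun μ hμ => key1 μ ((hSmem μ).1 hμ)
  have step2 : ∑ μ ∈ Sᶜ, (f R).prob μ ≤ ∑ μ ∈ Sᶜ, (f Rs).prob μ :=
    Finset.sum_le_sum fun μ hμ =>
      key2 μ (by simpa using (hSmem μ).not.1 (Finset.mem_compl.1 hμ))
  have hsplit : ∀ p : Lottery N O q, ∑ μ ∈ S, p.prob μ + ∑ μ ∈ Sᶜ, p.prob μ = 1 := by
    intro p
    rw [Finset.sum_add_sum_compl]
    exact p.sum_one
  have step3 : ∑ μ ∈ S, (f Rs).prob μ ≤ ∑ μ ∈ S, (f R).prob μ := by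
    have h1 := hsplit (f Rs)
    have h2 := hsplit (f R)
    linarith
  exact le_trans step1 step3
end

section
/- If a random assignment rule f satisfies probabilistic monotonicity and f^{iz}(R) = f^{iz}(R'_i, R_{-i}) for some object z and some adjacent-swap deviation R'_i of agent i, then f_μ(R) = f_μ(R'_i, R_{-i}) for every assignment μ with μ_i = z; i.e., probabilistic monotonicity implies weak object-wise non-bossiness. -/
open Finset
open scoped Classical

lemma Pref.asymm' {O : Type} (R : Pref O) {a b : O} (h : R.pref a b) : ¬ R.pref b a :=
  fun h' => R.irrefl a (R.trans h h')

/-- probabilistic monotonicity implies weak object-wise non-bossiness. -/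
theorem stmt6 {N O : Type} [Fintype N] [Fintype O] {q : O → ℕ}
    (f : (N → Pref O) → Lottery N O q) (h : ProbMono f)
    (i : N) (R : N → Pref O) (Ri' : Pref O) (x y : O)
    (hswap : IsAdjSwap (R i) Ri' x y) (z : O)
    (heq : margin (f R) i z = margin (f (Function.update R i Ri')) i z) :
    ∀ μ : Assignment N O q, μ.toFun i = z →
      (f R).prob μ = (f (Function.update R i Ri')).prob μ := by
  obtain ⟨hxy, hxyP, hyxP', h4, h5, h6⟩ := hswap
  set R' := Function.update R i Ri' with hR'def
  have hR'i : R' i = Ri' := Function.update_self i Ri' R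
  have hR'j : ∀ j, j ≠ i → R' j = R j := fun j hj => Function.update_of_ne hj Ri' R
  -- For μ with μ i = y : R' is a μ-monotonic transformation of R
  have key1 : ∀ μ : Assignment N O q, μ.toFun i = y → (f R).prob μ ≤ (f R').prob μ := by
    intro μ hμ
    apply h R R' μ
    intro j w hw
    by_cases hj : j = i
    · subst hj
      rw [hR'i] at hw
      rw [hμ] at hw ⊢
      by_cases hwx : w = x
      · rw [hwx] at hw; exact absurd hw (Ri'.asymm' hyxP')
      · by_cases hwy : w = y
        · rw [hwy] at hw; exact absurd hw (Ri'.irrefl y)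
        · exact (h4 w y hwx (Ne.symm hxy)).mpr hw
    · rw [hR'j j hj] at hw; exact hw
  -- For μ with μ i = x : R is a μ-monotonic transformation of R'
  have key2 : ∀ μ : Assignment N O q, μ.toFun i = x → (f R').prob μ ≤ (f R).prob μ := by
    intro μ hμ
    apply h R' R μ
    intro j w hw
    by_cases hj : j = i
    · subst hj
      rw [hR'i]
      rw [hμ] at hw ⊢
      by_cases hwy : w = y
      · rw [hwy] at hw; exact absurd hw ((R j).asymm' hxyP)
      · by_cases hwx : w = x
        · rw [hwx] at hw; exact absurd hw ((R j).irrefl x)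
        · exact (h5 w x hwy hxy).mp hw
    · rw [hR'j j hj]; exact hw
  by_cases hzx : z = x
  · -- z = x : termwise f R' ≤ f R, sums equal, so termwise equal
    have hsum : ∀ μ ∈ Finset.univ.filter (fun μ : Assignment N O q => μ.toFun i = z),
        (f R').prob μ ≤ (f R).prob μ := by
      intro μ hμ
      exact key2 μ (hzx ▸ (Finset.mem_filter.mp hμ).2)
    have := (Finset.sum_eq_sum_iff_of_le hsum).mp heq.symm
    intro μ hμ
    exact ((this μ (Finset.mem_filter.mpr ⟨Finset.mem_univ μ, hμ⟩))).symm
  · by_cases hzy : z = y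
    · -- z = y : termwise f R ≤ f R', sums equal, so termwise equal
      have hsum : ∀ μ ∈ Finset.univ.filter (fun μ : Assignment N O q => μ.toFun i = z),
          (f R).prob μ ≤ (f R').prob μ := by
        intro μ hμ
        exact key1 μ (hzy ▸ (Finset.mem_filter.mp hμ).2)
      have := (Finset.sum_eq_sum_iff_of_le hsum).mp heq
      intro μ hμ
      exact this μ (Finset.mem_filter.mpr ⟨Finset.mem_univ μ, hμ⟩)
    · -- z ∉ {x, y} : both monotonic transformations, equality directly
      intro μ hμ
      apply le_antisymm
      · apply h R R' μ
        intro j w hw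
        by_cases hj : j = i
        · subst hj
          rw [hR'i] at hw
          rw [hμ] at hw ⊢
          by_cases hwx : w = x
          · rw [hwx] at hw ⊢
            rcases (R j).total x z (fun hq => hzx hq.symm) with hp | hp
            · exact hp
            · exfalso
              have h1 : (R j).pref z y := (h6 z hzx hzy).mp hp
              have h2 : Ri'.pref z y := (h4 z y hzx (Ne.symm hxy)).mp h1
              exact Ri'.asymm' hw (Ri'.trans h2 hyxP')
          · exact (h4 w z hwx hzx).mpr hw
        · rw [hR'j j hj] at hw; exact hw
      · apply h R' R μ
        intro j w hw
        by_cases hj : j = i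
        · subst hj
          rw [hR'i]
          rw [hμ] at hw ⊢
          by_cases hwy : w = y
          · rw [hwy] at hw ⊢
            rcases Ri'.total y z (fun hq => hzy hq.symm) with hp | hp
            · exact hp
            · exfalso
              have h1 : (R j).pref z y := (h4 z y hzx (Ne.symm hxy)).mpr hp
              exact (R j).asymm' hw h1
          · exact (h5 w z hwy hzy).mp hw
        · rw [hR'j j hj]; exact hw
end

section
/- If a random assignment rule satisfies probabilistic monotonicity, then for any agent i, adjacent swap of objects x, y in i's preference (with xP_iy, yP'_ix), and any assignment μ with μ_i ∉ {x, y}, the probability of μ is unchanged: f_μ(R) = f_μ(R'_i, R_{-i}). That is, probabilistic monotonicity implies pairwise responsiveness. -/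
open Finset
open scoped Classical

/-- probabilistic monotonicity implies pairwise responsiveness. -/
theorem stmt7 {N O : Type} [Fintype N] [Fintype O] {q : O → ℕ}
    (f : (N → Pref O) → Lottery N O q) (h : ProbMono f) :
    PairwiseResp f := by
  intro i R Ri' x y hsw μ hx hy
  obtain ⟨hxy, hPxy, hP'yx, hA, hB, hC⟩ := hsw
  have key : ∀ z, (R i).pref z (μ.toFun i) ↔ Ri'.pref z (μ.toFun i) := by
    intro z
    by_cases hz : z = x
    · rw [hz]
      exact hB x (μ.toFun i) hxy hy
    · exact hA z (μ.toFun i) hz hx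
  have h1 : MonTransf R (Function.update R i Ri') μ.toFun := by
    intro j z hz
    by_cases hj : j = i
    · subst hj
      rw [Function.update_self] at hz
      exact (key z).mpr hz
    · rwa [Function.update_of_ne hj] at hz
  have h2 : MonTransf (Function.update R i Ri') R μ.toFun := by
    intro j z hz
    by_cases hj : j = i
    · subst hj
      rw [Function.update_self]
      exact (key z).mp hz
    · rwa [Function.update_of_ne hj]
  exact le_antisymm (h _ _ μ h2) (h _ _ μ h1)
end

section
/- For any preference profile R and any collection of individual object-assignment probabilities (p^{ia}), the following are equivalent: (i) for all agents i, j with R_i = R_j and all objects a, p^{ia} = p^{ja}; (ii) there exists a lottery q over deterministic assignments inducing the probabilities p^{ia} such that q satisfies equal-treatment-of-equals (i.e., for any i, j with R_i = R_j and assignments μ, μ' that differ only by swapping the objects of i and j, q_μ = q_{μ'}). -/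
open Finset
open scoped Classical

namespace Stmt10Aux

variable {N O : Type} [Fintype N] [Fintype O] {q : O → ℕ}

lemma Assignment.ext' {μ ν : Assignment N O q} (h : μ.toFun = ν.toFun) : μ = ν := by
  cases μ; cases ν; dsimp at h; subst h; rfl

noncomputable def permComp (μ : Assignment N O q) (e : N ≃ N) : Assignment N O q where
  toFun := fun k => μ.toFun (e k)
  capacity := by
    intro x
    have hcard : (Finset.univ.filter fun i => μ.toFun (e i) = x).card
        = (Finset.univ.filter fun i => μ.toFun i = x).card := by
      apply Finset.card_nbij (fun i => e i)
      · intro i hi; simp_all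
      · intro i _ j _ h; exact e.injective h
      · intro j hj
        simp only [Finset.coe_filter, Set.mem_setOf_eq, Finset.mem_univ, true_and] at hj ⊢
        exact ⟨e.symm j, by simpa using hj, by simp⟩
    rw [hcard]; exact μ.capacity x

@[simp] lemma permComp_toFun (μ : Assignment N O q) (e : N ≃ N) (k : N) :
    (permComp μ e).toFun k = μ.toFun (e k) := rfl

noncomputable def assignEquiv (e : N ≃ N) : Assignment N O q ≃ Assignment N O q where
  toFun := fun μ => permComp μ e
  invFun := fun μ => permComp μ e.symm
  left_inv := fun μ => Assignment.ext' (by funext k; simp)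
  right_inv := fun μ => Assignment.ext' (by funext k; simp)

end Stmt10Aux

open Stmt10Aux in
/-- equal individual probabilities for equals iff some inducing lottery
satisfies equal-treatment-of-equals. -/
theorem stmt10 {N O : Type} [Fintype N] [Fintype O] {q : O → ℕ}
    (R : N → Pref O) (p : N → O → ℝ)
    (hp : ∃ q0 : Lottery N O q, ∀ i a, margin q0 i a = p i a) :
    (∀ i j, R i = R j → ∀ a, p i a = p j a) ↔
      (∃ q0 : Lottery N O q, (∀ i a, margin q0 i a = p i a) ∧ ETE R q0) := by
  classical
  constructor
  · -- forward: symmetrize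
    intro heq
    obtain ⟨q0, hq0⟩ := hp
    set G : Finset (N ≃ N) := Finset.univ.filter (fun σ : N ≃ N => ∀ k, R (σ k) = R k) with hG
    have h1G : (1 : N ≃ N) ∈ G := by simp [hG]
    have hGpos : (0:ℝ) < (G.card : ℝ) := by
      have := Finset.card_pos.mpr ⟨1, h1G⟩
      exact_mod_cast this
    -- sum over all assignments of prob(permComp μ σ) is 1
    have hsum : ∀ σ : N ≃ N, ∑ μ : Assignment N O q, q0.prob (permComp μ σ) = 1 := by
      intro σ
      rw [← q0.sum_one]
      exact Fintype.sum_equiv (assignEquiv σ) _ _ (fun μ => rfl)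
    refine ⟨⟨fun μ => (∑ σ ∈ G, q0.prob (permComp μ σ)) / G.card, ?_, ?_⟩, ?_, ?_⟩
    · intro μ
      apply div_nonneg _ hGpos.le
      exact Finset.sum_nonneg (fun σ _ => q0.nonneg _)
    · rw [← Finset.sum_div, Finset.sum_comm]
      rw [Finset.sum_congr rfl (fun σ _ => hsum σ)]
      simp [div_self hGpos.ne']
    · -- margins
      intro i a
      unfold margin
      dsimp only
      rw [← Finset.sum_div, Finset.sum_comm]
      have hinner : ∀ σ ∈ G,
          ∑ μ ∈ Finset.univ.filter (fun μ : Assignment N O q => μ.toFun i = a),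
            q0.prob (permComp μ σ) = p i a := by
        intro σ hσ
        have hRσ : ∀ k, R (σ k) = R k := by simpa [hG] using hσ
        have hsub : ∑ μ ∈ Finset.univ.filter (fun μ : Assignment N O q => μ.toFun i = a),
            q0.prob (permComp μ σ)
            = ∑ ν ∈ Finset.univ.filter (fun ν : Assignment N O q => ν.toFun (σ.symm i) = a),
              q0.prob ν := by
          apply Finset.sum_nbij' (i := fun μ => permComp μ σ) (j := fun ν => permComp ν σ.symm)
          · intro μ hμ
            simp only [Finset.mem_filter, Finset.mem_univ, true_and] at hμ ⊢
            simpa [hμ] using congrArg (fun f => f (σ.symm i)) (rfl : (permComp μ σ).toFun = fun k => μ.toFun (σ k))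
          · intro ν hν
            simp only [Finset.mem_filter, Finset.mem_univ, true_and] at hν ⊢
            simpa using hν
          · intro μ _; exact Assignment.ext' (by funext k; simp)
          · intro ν _; exact Assignment.ext' (by funext k; simp)
          · intro μ _; rfl
        have hm := hq0 (σ.symm i) a
        unfold margin at hm
        rw [hsub, hm]
        have : R (σ.symm i) = R i := by
          have := hRσ (σ.symm i); simpa using this.symm
        exact heq _ _ this a
      rw [Finset.sum_congr rfl hinner]
      rw [Finset.sum_const, nsmul_eq_mul]
      field_simp
    · -- ETE
      intro i j hij μ ν hμν hνμ hk
      have hνeq : ν = permComp μ (Equiv.swap i j) := by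
        apply Assignment.ext'
        funext k
        rcases eq_or_ne k i with rfl | hki
        · simpa [Equiv.swap_apply_left] using hνμ.symm
        rcases eq_or_ne k j with rfl | hkj
        · simpa [Equiv.swap_apply_right] using hμν.symm
        · simpa [Equiv.swap_apply_of_ne_of_ne hki hkj] using (hk k hki hkj).symm
      have hswapG : ∀ k, R (Equiv.swap i j k) = R k := by
        intro k
        rcases eq_or_ne k i with rfl | hki
        · simpa [Equiv.swap_apply_left] using hij.symm
        rcases eq_or_ne k j with rfl | hkj
        · simpa [Equiv.swap_apply_right] using hij
        · simp [Equiv.swap_apply_of_ne_of_ne hki hkj]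
      dsimp only
      congr 1
      rw [hνeq]
      apply Finset.sum_nbij' (i := fun σ => σ.trans (Equiv.swap i j))
        (j := fun σ => σ.trans (Equiv.swap i j))
      · intro σ hσ
        simp only [hG, Finset.mem_filter, Finset.mem_univ, true_and] at hσ ⊢
        intro k; rw [Equiv.trans_apply, hswapG, hσ]
      · intro σ hσ
        simp only [hG, Finset.mem_filter, Finset.mem_univ, true_and] at hσ ⊢
        intro k; rw [Equiv.trans_apply, hswapG, hσ]
      · intro σ _; ext k; simp
      · intro σ _; ext k; simp
      · intro σ _
        congr 1
        exact Assignment.ext' (by funext k; simp [Equiv.trans_apply])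
  · -- backward
    rintro ⟨q0, hq0, hete⟩ i j hij a
    rw [← hq0 i a, ← hq0 j a]
    unfold margin
    apply Finset.sum_nbij' (i := fun μ => permComp μ (Equiv.swap i j))
      (j := fun μ => permComp μ (Equiv.swap i j))
    · intro μ hμ
      simp only [Finset.mem_filter, Finset.mem_univ, true_and] at hμ ⊢
      simpa [Equiv.swap_apply_right] using hμ
    · intro μ hμ
      simp only [Finset.mem_filter, Finset.mem_univ, true_and] at hμ ⊢
      simpa [Equiv.swap_apply_left] using hμ
    · intro μ _; exact Assignment.ext' (by funext k; simp)
    · intro μ _; exact Assignment.ext' (by funext k; simp)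
    · intro μ _
      apply hete i j hij
      · simp [Equiv.swap_apply_right]
      · simp [Equiv.swap_apply_left]
      · intro k hki hkj; simp [Equiv.swap_apply_of_ne_of_ne hki hkj]
end

section
/- Every Pareto-efficient deterministic assignment is the outcome of some serial dictatorship: if μ is efficient at profile R, then there exists a strict priority order ▷ over the agents such that the serial dictatorship f^▷ at R outputs μ. -/
open Finset
open scoped Classical

namespace SD12

open Finset

variable {N O : Type} [Fintype N] [Fintype O]

/-- Every nonempty finite set has a best element. -/
lemma exists_best (R : Pref O) (S : Finset O) (hS : S.Nonempty) :
    ∃ x ∈ S, ∀ y ∈ S, y ≠ x → R.pref x y := by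
  classical
  induction S using Finset.induction_on with
  | empty => exact absurd hS (by simp)
  | @insert a s ha ih =>
    rcases s.eq_empty_or_nonempty with rfl | hs
    · exact ⟨a, by simp, by simp⟩
    · obtain ⟨x, hx, hbest⟩ := ih hs
      have hax : a ≠ x := fun h => ha (h ▸ hx)
      rcases R.total a x hax with hpref | hpref
      · refine ⟨a, Finset.mem_insert_self _ _, ?_⟩
        intro y hy hya
        rcases Finset.mem_insert.1 hy with rfl | hy
        · exact absurd rfl hya
        · by_cases hyx : y = x
          · exact hyx ▸ hpref
          · exact R.trans hpref (hbest y hy hyx)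
      · refine ⟨x, Finset.mem_insert_of_mem hx, ?_⟩
        intro y hy hyx
        rcases Finset.mem_insert.1 hy with rfl | hy
        · exact hpref
        · exact hbest y hy hyx

lemma best_eq [Nonempty O] (R : Pref O) (S : Finset O) (x : O) (hx : x ∈ S)
    (hbest : ∀ y ∈ S, y ≠ x → R.pref x y) : R.best S = x := by
  have h : ∃ z ∈ S, ∀ y ∈ S, y ≠ z → R.pref z y := ⟨x, hx, hbest⟩
  rw [Pref.best, dif_pos h]
  obtain ⟨hz, hzbest⟩ := h.choose_spec
  by_contra hne
  exact R.irrefl _ (R.trans (hzbest x hx fun e => hne e.symm) (hbest _ hz hne))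

/-- Objects with remaining capacity once the agents outside `S` got their `μ` assignments. -/
noncomputable def availSet (q : O → ℕ) (μ : Assignment N O q) (S : Finset N) : Finset O :=
  univ.filter fun x => ((univ \ S).filter fun j => μ.toFun j = x).card < q x

lemma mem_availSet {q : O → ℕ} (μ : Assignment N O q) {S : Finset N} {i : N} (hi : i ∈ S) :
    μ.toFun i ∈ availSet q μ S := by
  simp only [availSet, mem_filter, mem_univ, true_and]
  refine lt_of_lt_of_le (Finset.card_lt_card ?_) (μ.capacity (μ.toFun i))
  rw [Finset.ssubset_iff_of_subset]
  · exact ⟨i, by simp, by simp [hi]⟩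
  · intro j hj
    simp only [mem_filter, mem_sdiff, mem_univ, true_and] at hj ⊢
    exact hj.2

/-- Key lemma: at an efficient assignment, some remaining agent already holds their
best object among those with remaining capacity. -/
lemma exists_top {q : O → ℕ} {R : N → Pref O} {μ : Assignment N O q}
    (hEff : Efficient R μ) {S : Finset N} (hS : S.Nonempty) :
    ∃ i ∈ S, ∀ y ∈ availSet q μ S, y ≠ μ.toFun i → (R i).pref (μ.toFun i) y := by
  classical
  by_contra hcon
  push_neg at hcon
  have htop : ∀ i ∈ S, ∃ y ∈ availSet q μ S, (R i).pref y (μ.toFun i) := by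
    intro i hi
    obtain ⟨y, hy, hyne, hnp⟩ := hcon i hi
    rcases (R i).total y (μ.toFun i) hyne with h1 | h1
    · exact ⟨y, hy, h1⟩
    · exact absurd h1 hnp
  by_cases hA : ∃ i ∈ S, ∃ y ∈ availSet q μ S, (R i).pref y (μ.toFun i) ∧
      (univ.filter fun j => μ.toFun j = y).card < q y
  · -- direct single-agent improvement
    obtain ⟨i, hi, y, hy, hpref, hcount⟩ := hA
    have hne : μ.toFun i ≠ y := fun e => (R i).irrefl _ (e ▸ hpref)
    refine hEff ⟨⟨Function.update μ.toFun i y, ?_⟩, ?_, i, ?_⟩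
    · intro x
      by_cases hx : x = y
      · subst hx
        have hsub : (univ.filter fun j => Function.update μ.toFun i x j = x)
            ⊆ insert i (univ.filter fun j => μ.toFun j = x) := by
          intro j hj
          simp only [mem_filter, mem_univ, true_and, Function.update_apply] at hj
          by_cases hji : j = i
          · simp [hji]
          · simp only [if_neg hji] at hj
            exact Finset.mem_insert_of_mem (by simp [hj])
        calc (univ.filter fun j => Function.update μ.toFun i x j = x).card
            ≤ (insert i (univ.filter fun j => μ.toFun j = x)).card :=
              Finset.card_le_card hsub
          _ ≤ (univ.filter fun j => μ.toFun j = x).card + 1 := Finset.card_insert_le _ _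
          _ ≤ q x := hcount
      · have hsub : (univ.filter fun j => Function.update μ.toFun i y j = x)
            ⊆ univ.filter fun j => μ.toFun j = x := by
          intro j hj
          simp only [mem_filter, mem_univ, true_and, Function.update_apply] at hj
          by_cases hji : j = i
          · rw [if_pos hji] at hj; exact absurd hj.symm hx
          · rw [if_neg hji] at hj; simp [hj]
        exact le_trans (Finset.card_le_card hsub) (μ.capacity x)
    · intro j
      by_cases hji : j = i
      · subst hji; exact Or.inr (by simpa using hpref)
      · exact Or.inl (by simp [Function.update_apply, hji])
    · simpa using hpref
  · -- cycle improvement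
    push_neg at hA
    have hstep : ∀ i ∈ S, ∃ j ∈ S, (R i).pref (μ.toFun j) (μ.toFun i) := by
      intro i hi
      obtain ⟨y, hy, hpref⟩ := htop i hi
      have h2 := hA i hi y hy hpref
      have h3 : ((univ \ S).filter fun j => μ.toFun j = y).card < q y := by
        simpa [availSet] using hy
      have h1 : ((univ \ S).filter fun j => μ.toFun j = y).card <
          (univ.filter fun j => μ.toFun j = y).card := by omega
      obtain ⟨j, hj1, hj2⟩ : ∃ j, j ∈ (univ.filter fun j => μ.toFun j = y) ∧
          j ∉ ((univ \ S).filter fun j => μ.toFun j = y) := by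
        by_contra hc
        push_neg at hc
        exact absurd (Finset.card_le_card fun j hj => hc j hj) (not_le.2 h1)
      simp only [mem_filter, mem_univ, true_and] at hj1
      refine ⟨j, ?_, by rw [hj1]; exact hpref⟩
      by_contra hjS
      exact hj2 (Finset.mem_filter.2 ⟨Finset.mem_sdiff.2 ⟨mem_univ j, hjS⟩, hj1⟩)
    have hstep' : ∀ i, ∃ j, i ∈ S → j ∈ S ∧ (R i).pref (μ.toFun j) (μ.toFun i) := by
      intro i
      by_cases hi : i ∈ S
      · obtain ⟨j, hj⟩ := hstep i hi
        exact ⟨j, fun _ => hj⟩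
      · exact ⟨i, fun h => absurd h hi⟩
    choose g hgS using hstep'
    obtain ⟨c₀, hc₀⟩ := hS
    have hiter0 : ∀ t, g^[t] c₀ ∈ S := by
      intro t; induction t with
      | zero => simpa
      | succ t ih => rw [Function.iterate_succ_apply' g t c₀]; exact (hgS _ ih).1
    have hcycle : ∃ c p, 0 < p ∧ c ∈ S ∧ g^[p] c = c := by
      obtain ⟨m, n, hmn, heq⟩ := Finite.exists_ne_map_eq_of_infinite fun t : ℕ => g^[t] c₀
      rcases hmn.lt_or_gt with h | h
      · exact ⟨g^[m] c₀, n - m, by omega, hiter0 m, by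
          rw [← Function.iterate_add_apply, show n - m + m = n by omega]; exact heq.symm⟩
      · exact ⟨g^[n] c₀, m - n, by omega, hiter0 n, by
          rw [← Function.iterate_add_apply, show m - n + n = m by omega]; exact heq⟩
    obtain ⟨c, p, hp, hcS, hpc⟩ := hcycle
    have hiter : ∀ t, g^[t] c ∈ S := by
      intro t; induction t with
      | zero => simpa
      | succ t ih => rw [Function.iterate_succ_apply' g t c]; exact (hgS _ ih).1
    set C : Finset N := (Finset.range p).image (fun t => g^[t] c) with hC
    have hcC : c ∈ C := mem_image.2 ⟨0, mem_range.2 hp, rfl⟩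
    have hCS : C ⊆ S := by
      intro j hj
      obtain ⟨t, _, rfl⟩ := mem_image.1 hj
      exact hiter t
    have hmapsto : ∀ j ∈ C, g j ∈ C := by
      intro j hj
      obtain ⟨t, ht, rfl⟩ := mem_image.1 hj
      rw [← Function.iterate_succ_apply' g t c]
      rcases eq_or_lt_of_le (Nat.succ_le_of_lt (mem_range.1 ht)) with he | hl
      · rw [he, hpc]; exact hcC
      · exact mem_image.2 ⟨t + 1, mem_range.2 hl, rfl⟩
    have hsurj : ∀ j ∈ C, ∃ y, ∃ _ : y ∈ C, g y = j := by
      intro j hj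
      obtain ⟨t, ht, rfl⟩ := mem_image.1 hj
      have ht' := mem_range.1 ht
      rcases Nat.eq_zero_or_pos t with rfl | htpos
      · refine ⟨g^[p-1] c, mem_image.2 ⟨p - 1, mem_range.2 (by omega), rfl⟩, ?_⟩
        rw [← Function.iterate_succ_apply' g (p-1) c, show (p-1).succ = p from by omega, hpc]
        rfl
      · refine ⟨g^[t-1] c, mem_image.2 ⟨t - 1, mem_range.2 (by omega), rfl⟩, ?_⟩
        rw [← Function.iterate_succ_apply' g (t-1) c, show (t-1).succ = t from by omega]
    have hinj : ∀ j₁ ∈ C, ∀ j₂ ∈ C, g j₁ = g j₂ → j₁ = j₂ := by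
      intro j₁ h₁ j₂ h₂ he
      exact Finset.inj_on_of_surj_on_of_card_le (fun a _ => g a)
        (fun a ha => hmapsto a ha) hsurj le_rfl h₁ h₂ he
    have hfC : univ.filter (· ∈ C) = C := by ext j; simp
    have hcount : ∀ x,
        (univ.filter fun j => (if j ∈ C then μ.toFun (g j) else μ.toFun j) = x).card
          = (univ.filter fun j => μ.toFun j = x).card := by
      intro x
      rw [Finset.card_filter, Finset.card_filter,
        ← Finset.sum_filter_add_sum_filter_not univ (· ∈ C)
          (fun j => if (if j ∈ C then μ.toFun (g j) else μ.toFun j) = x then 1 else 0),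
        ← Finset.sum_filter_add_sum_filter_not univ (· ∈ C)
          (fun j => if μ.toFun j = x then 1 else 0)]
      congr 1
      · rw [hfC]
        have e1 : ∑ j ∈ C, (if (if j ∈ C then μ.toFun (g j) else μ.toFun j) = x then (1:ℕ) else 0)
            = ∑ j ∈ C, (if μ.toFun (g j) = x then (1:ℕ) else 0) :=
          Finset.sum_congr rfl (fun j hj => by simp only [if_pos hj])
        rw [e1]
        exact Finset.sum_bij (fun a _ => g a) hmapsto hinj hsurj (fun a ha => rfl)
      · refine Finset.sum_congr rfl fun j hj => ?_
        simp only [mem_filter] at hj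
        simp only [if_neg hj.2]
    refine hEff ⟨⟨fun j => if j ∈ C then μ.toFun (g j) else μ.toFun j,
      fun x => by rw [hcount]; exact μ.capacity x⟩, ?_, c, ?_⟩
    · intro j
      by_cases hj : j ∈ C
      · exact Or.inr (by simpa [hj] using (hgS j (hCS hj)).2)
      · exact Or.inl (by simp [hj])
    · simpa [hcC] using (hgS c hcS).2

variable (q : O → ℕ) (R : N → Pref O) (μ : Assignment N O q)

/-- List of the first `k` agents picked greedily: each successive agent is one who holds
their best available object. -/
noncomputable def pickList : ℕ → List N
  | 0 => []
  | k + 1 =>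
    let l := pickList k
    if hl : (univ \ l.toFinset).Nonempty then
      l ++ [if h : ∃ i ∈ (univ \ l.toFinset),
          ∀ y ∈ availSet q μ (univ \ l.toFinset), y ≠ μ.toFun i → (R i).pref (μ.toFun i) y
        then h.choose else hl.choose]
    else l

lemma pickList_basic : ∀ k, (pickList q R μ k).Nodup ∧
    (pickList q R μ k).length = min k (Fintype.card N) := by
  intro k
  induction k with
  | zero => simp [pickList]
  | succ k ih =>
    obtain ⟨hnd, hlen⟩ := ih
    rw [pickList]
    by_cases hl : (univ \ (pickList q R μ k).toFinset).Nonempty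
    · simp only [dif_pos hl]
      set a := if h : ∃ i ∈ (univ \ (pickList q R μ k).toFinset),
          ∀ y ∈ availSet q μ (univ \ (pickList q R μ k).toFinset),
            y ≠ μ.toFun i → (R i).pref (μ.toFun i) y
        then h.choose else hl.choose with ha
      have haS : a ∈ univ \ (pickList q R μ k).toFinset := by
        rw [ha]
        split
        · next h => exact h.choose_spec.1
        · exact hl.choose_spec
      have hanotin : a ∉ pickList q R μ k := by
        rw [Finset.mem_sdiff] at haS
        simpa using haS.2
      have hklt : k < Fintype.card N := by
        by_contra hge
        have h1 : (pickList q R μ k).toFinset.card = Fintype.card N := by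
          apply le_antisymm (Finset.card_le_univ _)
          rw [List.toFinset_card_of_nodup hnd, hlen]
          omega
        have : (pickList q R μ k).toFinset = univ :=
          Finset.eq_univ_of_card _ (by rw [h1])
        rw [this] at hl
        simp at hl
      constructor
      · rw [List.nodup_append]
        exact ⟨hnd, List.nodup_singleton a, by
          intro b hb c hc e; rw [List.mem_singleton] at hc; subst hc; exact hanotin (e ▸ hb)⟩
      · rw [List.length_append, hlen]
        simp
        omega
    · simp only [dif_neg hl]
      have h1 : Fintype.card N ≤ (pickList q R μ k).length := by
        rw [← List.toFinset_card_of_nodup hnd, ← Finset.card_univ]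
        apply Finset.card_le_card
        intro j _
        by_contra hj
        exact hl ⟨j, Finset.mem_sdiff.2 ⟨mem_univ j, hj⟩⟩
      refine ⟨hnd, ?_⟩
      omega

lemma pickList_prefix : ∀ m k, k ≤ m → pickList q R μ k <+: pickList q R μ m := by
  intro m
  induction m with
  | zero => intro k hk; interval_cases k; exact List.prefix_refl _
  | succ m ih =>
    intro k hk
    rcases Nat.eq_or_lt_of_le hk with rfl | hlt
    · exact List.prefix_refl _
    · refine (ih k (by omega)).trans ?_
      rw [pickList]
      split
      · exact List.prefix_append _ _
      · exact List.prefix_refl _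

lemma pickList_step {hEff : Efficient R μ} (k : ℕ) (hk : k < Fintype.card N) :
    ∃ a, pickList q R μ (k + 1) = pickList q R μ k ++ [a] ∧
      a ∈ univ \ (pickList q R μ k).toFinset ∧
      (∀ y ∈ availSet q μ (univ \ (pickList q R μ k).toFinset),
        y ≠ μ.toFun a → (R a).pref (μ.toFun a) y) := by
  obtain ⟨hnd, hlen⟩ := pickList_basic q R μ k
  have hl : (univ \ (pickList q R μ k).toFinset).Nonempty := by
    rw [← Finset.card_pos, Finset.card_sdiff_of_subset (Finset.subset_univ _), Finset.card_univ,
        List.toFinset_card_of_nodup hnd, hlen]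
    omega
  have hS : ∃ i ∈ (univ \ (pickList q R μ k).toFinset),
      ∀ y ∈ availSet q μ (univ \ (pickList q R μ k).toFinset),
        y ≠ μ.toFun i → (R i).pref (μ.toFun i) y := exists_top hEff hl
  refine ⟨hS.choose, ?_, hS.choose_spec.1, hS.choose_spec.2⟩
  rw [pickList]
  simp only [dif_pos hl, dif_pos hS]

lemma count_map_eq {f : N → O} : ∀ (l : List N), l.Nodup → ∀ x : O,
    (l.map f).count x = (l.toFinset.filter fun j => f j = x).card := by
  intro l
  induction l with
  | nil => intro _ x; simp
  | cons a l ih =>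
    intro hnd x
    obtain ⟨hal, hnd'⟩ := List.nodup_cons.1 hnd
    rw [List.map_cons, List.count_cons, ih hnd' x, List.toFinset_cons, Finset.filter_insert]
    by_cases hfa : f a = x
    · rw [if_pos (by simp [hfa]), if_pos hfa,
        Finset.card_insert_of_notMem (fun hm => hal (by simpa using (Finset.mem_filter.1 hm).1))]
    · rw [if_neg (by simp [hfa]), if_neg hfa, Nat.add_zero]

end SD12

/-- every Pareto-efficient assignment is a serial dictatorship outcome. -/
theorem stmt12 {N O : Type} [Fintype N] [Fintype O] [Nonempty O]
    (q : O → ℕ) (hq : Fintype.card N ≤ ∑ x, q x)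
    (R : N → Pref O) (μ : Assignment N O q) (h : Efficient R μ) :
    ∃ π : Fin (Fintype.card N) ≃ N, sd q R π = μ.toFun := by
  classical
  obtain ⟨hnd, hlen0⟩ := SD12.pickList_basic q R μ (Fintype.card N)
  have hlen : (SD12.pickList q R μ (Fintype.card N)).length = Fintype.card N := by
    rw [hlen0]; exact Nat.min_self _
  have hbij : Function.Bijective (fun m : Fin (Fintype.card N) =>
      (SD12.pickList q R μ (Fintype.card N)).get (Fin.cast hlen.symm m)) := by
    rw [Fintype.bijective_iff_injective_and_card]
    refine ⟨?_, by simp⟩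
    intro m1 m2 he
    simp only at he
    have h2 := hnd.get_inj_iff.1 he
    exact Fin.ext (by simpa using congrArg Fin.val h2)
  set π := Equiv.ofBijective _ hbij with hπdef
  have hstepπ : ∀ (k : ℕ) (hk : k < Fintype.card N),
      SD12.pickList q R μ (k+1) = SD12.pickList q R μ k ++ [π ⟨k, hk⟩] ∧
      π ⟨k, hk⟩ ∈ Finset.univ \ (SD12.pickList q R μ k).toFinset ∧
      (∀ y ∈ SD12.availSet q μ (Finset.univ \ (SD12.pickList q R μ k).toFinset),
        y ≠ μ.toFun (π ⟨k, hk⟩) → (R (π ⟨k, hk⟩)).pref (μ.toFun (π ⟨k, hk⟩)) y) := by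
    intro k hk
    obtain ⟨a, heq, haS, htopa⟩ := SD12.pickList_step q R μ (hEff := h) k hk
    have hlk : (SD12.pickList q R μ k).length = k := by
      rw [(SD12.pickList_basic q R μ k).2]; omega
    have hπa : π ⟨k, hk⟩ = a := by
      show (SD12.pickList q R μ (Fintype.card N)).get (Fin.cast hlen.symm ⟨k, hk⟩) = a
      obtain ⟨r, hr⟩ := SD12.pickList_prefix q R μ (Fintype.card N) (k + 1) hk
      have hL : SD12.pickList q R μ (Fintype.card N)
          = (SD12.pickList q R μ k ++ [a]) ++ r := by rw [← hr, heq]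
      rw [List.get_eq_getElem]
      simp only [hL]
      rw [List.getElem_append_left (by simp [hlk])]
      exact List.getElem_concat_length hlk.symm _
    rw [hπa]
    exact ⟨heq, haS, htopa⟩
  have haux : ∀ k, k ≤ Fintype.card N →
      sdAux q R π k = (SD12.pickList q R μ k).map μ.toFun := by
    intro k
    induction k with
    | zero => intro _; simp [sdAux, SD12.pickList]
    | succ k ih =>
      intro hk1
      have hk : k < Fintype.card N := hk1
      obtain ⟨heq, haS, htopa⟩ := hstepπ k hk
      simp only [sdAux]
      rw [dif_pos hk, ih (le_of_lt hk), heq, List.map_append, List.map_singleton]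
      congr 2
      have hsets : (Finset.univ.filter fun x =>
          ((SD12.pickList q R μ k).map μ.toFun).count x < q x)
          = SD12.availSet q μ (Finset.univ \ (SD12.pickList q R μ k).toFinset) := by
        ext x
        simp only [SD12.availSet, Finset.mem_filter, Finset.mem_univ, true_and]
        rw [SD12.count_map_eq _ (SD12.pickList_basic q R μ k).1,
          Finset.sdiff_sdiff_eq_self (Finset.subset_univ _)]
      rw [hsets]
      exact SD12.best_eq _ _ _ (SD12.mem_availSet μ haS) htopa
  refine ⟨π, funext fun i => ?_⟩
  have hv : (π.symm i).val < Fintype.card N := (π.symm i).isLt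
  show (sdAux q R π ((π.symm i).val + 1)).getD (π.symm i).val (Classical.arbitrary O) = μ.toFun i
  rw [haux _ hv]
  obtain ⟨heq, -, -⟩ := hstepπ (π.symm i).val hv
  rw [heq, List.map_append, List.map_singleton]
  have hlk : ((SD12.pickList q R μ (π.symm i).val).map μ.toFun).length = (π.symm i).val := by
    rw [List.length_map, (SD12.pickList_basic q R μ _).2]; omega
  rw [List.getD_eq_getElem _ _ (by simp [hlk]),
    List.getElem_concat_length hlk.symm, Fin.eta, Equiv.apply_symm_apply]
end

section
/- For random social choice rules on the universal domain of strict preferences over outcomes, strategy-proofness (in the stochastic dominance sense) is equivalent to probabilistic monotonicity: f is strategy-proof if and only if for any two profiles R, R' and outcome o such that R' is an o-monotonic transformation of R, f(R') assigns o weakly higher probability than f(R). -/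
open Finset
open scoped Classical

namespace Stmt13

variable {O : Type} [Fintype O]

noncomputable def rk (P : Pref O) (a : O) : ℕ :=
  (Finset.univ.filter fun b => P.pref b a).card

lemma rk_lt {P : Pref O} {a b : O} (h : P.pref a b) : rk P a < rk P b := by
  apply Finset.card_lt_card
  constructor
  · intro c hc
    simp only [Finset.mem_filter, Finset.mem_univ, true_and] at *
    exact P.trans hc h
  · intro hsub
    have ha : a ∈ Finset.univ.filter fun c => P.pref c b := by simp [h]
    have ha' := hsub ha
    simp only [Finset.mem_filter] at ha'
    exact P.irrefl a ha'.2

lemma pref_of_rk_lt {P : Pref O} {a b : O} (h : rk P a < rk P b) : P.pref a b := by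
  rcases eq_or_ne a b with rfl | hne
  · omega
  rcases P.total a b hne with h1 | h1
  · exact h1
  · exact absurd (rk_lt h1) (by omega)

lemma rk_inj {P : Pref O} {a b : O} (hne : a ≠ b) : rk P a ≠ rk P b := by
  rcases P.total a b hne with h | h
  · exact Nat.ne_of_lt (rk_lt h)
  · exact (Nat.ne_of_lt (rk_lt h)).symm

lemma rk_lt_M (P : Pref O) (a : O) : rk P a < Fintype.card O + 1 := by
  have := Finset.card_filter_le (Finset.univ : Finset O) (fun b => P.pref b a)
  simp only [Finset.card_univ] at this
  unfold rk; omega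

lemma key_inj_aux {M x y u v : ℕ} (hu : u < M) (hv : v < M)
    (h : x * M + u = y * M + v) : x = y ∧ u = v := by
  rcases lt_trichotomy x y with hl | rfl | hl
  · exfalso
    have h2 : (x + 1) * M ≤ y * M := Nat.mul_le_mul_right _ hl
    rw [add_one_mul] at h2
    linarith
  · exact ⟨rfl, Nat.add_left_cancel h⟩
  · exfalso
    have h2 : (y + 1) * M ≤ x * M := Nat.mul_le_mul_right _ hl
    rw [add_one_mul] at h2
    linarith

def mkPref (key : O → ℕ) (hinj : ∀ a b, a ≠ b → key a ≠ key b) : Pref O where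
  pref a b := key a < key b
  irrefl a := lt_irrefl _
  trans h1 h2 := h1.trans h2
  total a b hne := by
    rcases Nat.lt_or_ge (key a) (key b) with h | h
    · exact Or.inl h
    · exact Or.inr (lt_of_le_of_ne h (hinj b a hne.symm))

end Stmt13

namespace Stmt13

variable {O : Type} [Fintype O] {N : Type} [Fintype N]

lemma lemA (f : (N → Pref O) → O → ℝ)
    (hsp : ∀ (i : N) (R : N → Pref O) (Ri' : Pref O) (x : O),
        ∑ a ∈ Finset.univ.filter (fun a => (R i).wpref a x),
            f (Function.update R i Ri') a ≤
          ∑ a ∈ Finset.univ.filter (fun a => (R i).wpref a x), f R a)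
    (i : N) (R : N → Pref O) (Ri' : Pref O) (o : O)
    (hT : ∀ a b, Ri'.pref a o → (R i).pref b a → Ri'.pref b o) :
    f R o ≤ f (Function.update R i Ri') o := by
  classical
  set T : Finset O := Finset.univ.filter (fun a => Ri'.pref a o) with hTdef
  have hmemT : ∀ a, a ∈ T ↔ Ri'.pref a o := by intro a; simp [hTdef]
  have hoT : o ∉ T := by rw [hmemT]; exact Ri'.irrefl o
  have hU' : Finset.univ.filter (fun a => Ri'.wpref a o) = insert o T := by
    ext a
    simp only [Finset.mem_filter, Finset.mem_univ, true_and, Finset.mem_insert, hmemT]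
    exact Iff.rfl
  have h1 : ∑ a ∈ insert o T, f R a ≤ ∑ a ∈ insert o T, f (Function.update R i Ri') a := by
    have h := hsp i (Function.update R i Ri') (R i) o
    simp only [Function.update_self, Function.update_idem, Function.update_eq_self] at h
    rwa [hU'] at h
  have h2 : ∑ a ∈ T, f (Function.update R i Ri') a ≤ ∑ a ∈ T, f R a := by
    rcases T.eq_empty_or_nonempty with hE | hne
    · simp [hE]
    · obtain ⟨z, hz, hzmax⟩ := T.exists_max_image (rk (R i)) hne
      have hzT : Ri'.pref z o := (hmemT z).1 hz
      have hTz : Finset.univ.filter (fun a => (R i).wpref a z) = T := by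
        ext a
        simp only [Finset.mem_filter, Finset.mem_univ, true_and, hmemT]; unfold Pref.wpref
        constructor
        · rintro (rfl | h)
          · exact hzT
          · exact hT z a hzT h
        · intro ha
          rcases eq_or_ne a z with rfl | hne'
          · exact Or.inl rfl
          · refine Or.inr ?_
            have hle := hzmax a ((hmemT a).2 ha)
            rcases Nat.lt_or_ge (rk (R i) a) (rk (R i) z) with hlt | hge
            · exact pref_of_rk_lt hlt
            · exact absurd (le_antisymm hle hge) (rk_inj hne')
      have h := hsp i R Ri' z
      rwa [hTz] at h
  have e1 : ∑ a ∈ insert o T, f R a = f R o + ∑ a ∈ T, f R a := Finset.sum_insert hoT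
  have e2 : ∑ a ∈ insert o T, f (Function.update R i Ri') a
      = f (Function.update R i Ri') o + ∑ a ∈ T, f (Function.update R i Ri') a :=
    Finset.sum_insert hoT
  linarith

end Stmt13

namespace Stmt13

set_option linter.unusedSectionVars false

variable {O : Type} [Fintype O] {N : Type} [Fintype N]

lemma oneStep (f : (N → Pref O) → O → ℝ)
    (hsp : ∀ (i : N) (R : N → Pref O) (Ri' : Pref O) (x : O),
        ∑ a ∈ Finset.univ.filter (fun a => (R i).wpref a x),
            f (Function.update R i Ri') a ≤
          ∑ a ∈ Finset.univ.filter (fun a => (R i).wpref a x), f R a)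
    (i : N) (R : N → Pref O) (Ri' : Pref O) (o : O)
    (hm : ∀ y, Ri'.pref y o → (R i).pref y o) :
    f R o ≤ f (Function.update R i Ri') o := by
  classical
  set M : ℕ := Fintype.card O + 1 with hM
  set bi : O → ℕ := fun a =>
    if Ri'.pref a o then 0 else if (R i).pref a o then 1 else if a = o then 2 else 3
    with hbi
  set key : O → ℕ := fun a => bi a * M + rk (R i) a with hkey
  have hkinj : ∀ a b : O, a ≠ b → key a ≠ key b := by
    intro a b hne h
    have h' := key_inj_aux (rk_lt_M (R i) a) (rk_lt_M (R i) b) h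
    exact rk_inj hne h'.2
  set Q : Pref O := mkPref key hkinj with hQ
  have hQpref : ∀ a b : O, Q.pref a b ↔ key a < key b := fun a b => Iff.rfl
  have hbio : bi o = 2 := by
    simp [hbi, Ri'.irrefl o, (R i).irrefl o]
  have hbi_le : ∀ a, bi a ≤ 3 := by
    intro a; simp only [hbi]; split_ifs <;> omega
  -- strict upper contour of o under Q equals that under R i
  have hQo : ∀ a, Q.pref a o ↔ (R i).pref a o := by
    intro a
    rw [hQpref]
    constructor
    · intro h
      have hko : key o = 2 * M + rk (R i) o := by simp [hkey, hbio]
      have hbia : bi a ≤ 1 := by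
        by_contra hgt
        push_neg at hgt
        have h3 : bi a = 2 ∨ bi a = 3 := by have := hbi_le a; omega
        rcases h3 with h3 | h3
        · have hao : a = o := by
            by_contra hao
            by_cases p1 : Ri'.pref a o
            · simp [hbi, p1] at h3
            · by_cases p2 : (R i).pref a o
              · simp [hbi, p1, p2] at h3
              · simp [hbi, p1, p2, hao] at h3
          rw [hao] at h
          exact lt_irrefl _ h
        · have : key a = 3 * M + rk (R i) a := by simp [hkey, h3]
          rw [this, hko] at h
          have := rk_lt_M (R i) o
          omega
      -- bi a ≤ 1 means pref
      simp only [hbi] at hbia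
      split_ifs at hbia with p1 p2
      · exact hm a p1
      · exact p2
      · omega
      · omega
    · intro h
      have hbia : bi a ≤ 1 := by
        simp only [hbi]
        split_ifs with p1 p2 <;> first | omega | exact absurd h (by simp_all) 
      have hka : key a ≤ 1 * M + rk (R i) a :=
        Nat.add_le_add_right (Nat.mul_le_mul_right _ hbia) _
      have hko : key o = 2 * M + rk (R i) o := by simp [hkey, hbio]
      have hra := rk_lt_M (R i) a
      have hrb : (0:ℕ) ≤ rk (R i) o := Nat.zero_le _
      omega
  -- step 1 : R to Q
  have step1 : f R o ≤ f (Function.update R i Q) o := by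
    apply lemA f hsp i R Q o
    intro a b ha hba
    rw [hQo] at ha ⊢
    exact (R i).trans hba ha
  -- step 2 : Q to Ri'
  have step2 : f (Function.update R i Q) o ≤ f (Function.update R i Ri') o := by
    have h := lemA f hsp i (Function.update R i Q) Ri' o ?_
    · rwa [Function.update_idem] at h
    · intro a b ha hba
      simp only [Function.update_self] at hba
      have hkeya : key a = rk (R i) a := by
        have : bi a = 0 := by simp [hbi, ha]
        simp [hkey, this]
      have hkb : key b < M := by
        have := hba
        rw [hQpref] at this
        have := rk_lt_M (R i) a
        omega
      have hbib : bi b = 0 := by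
        by_contra hb0
        have h1 : 1 ≤ bi b := Nat.one_le_iff_ne_zero.2 hb0
        have : M ≤ key b := by
          have := Nat.mul_le_mul_right M h1
          simp only [hkey]
          omega
        omega
      simp only [hbi] at hbib
      split_ifs at hbib with p1
      · exact p1
  exact le_trans step1 step2

end Stmt13

namespace Stmt13

set_option linter.unusedSectionVars false

variable {O : Type} [Fintype O] {N : Type} [Fintype N]

lemma forward (f : (N → Pref O) → O → ℝ)
    (hsp : ∀ (i : N) (R : N → Pref O) (Ri' : Pref O) (x : O),
        ∑ a ∈ Finset.univ.filter (fun a => (R i).wpref a x),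
            f (Function.update R i Ri') a ≤
          ∑ a ∈ Finset.univ.filter (fun a => (R i).wpref a x), f R a)
    (R R' : N → Pref O) (o : O)
    (hm : ∀ i y, (R' i).pref y o → (R i).pref y o) : f R o ≤ f R' o := by
  classical
  have key : ∀ s : Finset N, f R o ≤ f (fun j => if j ∈ s then R' j else R j) o := by
    intro s
    induction s using Finset.induction_on with
    | empty => simp
    | insert _ _ hi _ =>
      rename_i i s ih
      have step : (fun j => if j ∈ insert i s then R' j else R j)
          = Function.update (fun j => if j ∈ s then R' j else R j) i (R' i) := by
        funext j
        rcases eq_or_ne j i with rfl | hj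
        · simp [Function.update_self, hi]
        · simp [Function.update_of_ne hj, Finset.mem_insert, hj]
      rw [step]
      refine le_trans ih ?_
      apply oneStep f hsp i _ (R' i) o
      intro y hy
      simp only [if_neg hi]
      exact hm i y hy
  have h := key Finset.univ
  simpa using h

lemma backward (f : (N → Pref O) → O → ℝ) (hsum : ∀ R : N → Pref O, ∑ o, f R o = 1)
    (hm : ∀ (R R' : N → Pref O) (o : O),
        (∀ i y, (R' i).pref y o → (R i).pref y o) → f R o ≤ f R' o)
    (i : N) (R : N → Pref O) (Ri' : Pref O) (x : O) :
    ∑ a ∈ Finset.univ.filter (fun a => (R i).wpref a x),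
        f (Function.update R i Ri') a ≤
      ∑ a ∈ Finset.univ.filter (fun a => (R i).wpref a x), f R a := by
  classical
  set M : ℕ := Fintype.card O + 1 with hM
  set U : Finset O := Finset.univ.filter (fun a => (R i).wpref a x) with hU
  have hmemU : ∀ a, a ∈ U ↔ (R i).wpref a x := by intro a; simp [hU]
  set key1 : O → ℕ := fun a => (if (R i).wpref a x then 0 else 1) * M + rk (R i) a
    with hkey1
  set key2 : O → ℕ := fun a => if (R i).wpref a x then rk (R i) a else M + rk Ri' a
    with hkey2
  have hk1inj : ∀ a b : O, a ≠ b → key1 a ≠ key1 b := by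
    intro a b hne h
    have h' := key_inj_aux (rk_lt_M (R i) a) (rk_lt_M (R i) b) h
    exact rk_inj hne h'.2
  have hk2inj : ∀ a b : O, a ≠ b → key2 a ≠ key2 b := by
    intro a b hne h
    simp only [hkey2] at h
    have hra := rk_lt_M (R i) a
    have hrb := rk_lt_M (R i) b
    split_ifs at h with p1 p2 p3
    · exact rk_inj hne h
    · omega
    · omega
    · exact rk_inj (P := Ri') hne (by omega)
  set Q1 : Pref O := mkPref key1 hk1inj with hQ1
  set Q2 : Pref O := mkPref key2 hk2inj with hQ2
  have hQ1pref : ∀ a b : O, Q1.pref a b ↔ key1 a < key1 b := fun a b => Iff.rfl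
  have hQ2pref : ∀ a b : O, Q2.pref a b ↔ key2 a < key2 b := fun a b => Iff.rfl
  clear_value M U key1 key2 Q1 Q2
  -- facts
  have hxU : (R i).wpref x x := Or.inl rfl
  -- (a) for o outside U, Q1-upper-contour of o is inside (R i)-upper-contour
  have hfa : ∀ o, ¬ (R i).wpref o x → ∀ y, Q1.pref y o → (R i).pref y o := by
    intro o ho y hy
    have hxo : (R i).pref x o := by
      rcases eq_or_ne o x with rfl | hne
      · exact absurd hxU ho
      · rcases (R i).total o x hne with h | h
        · exact absurd (Or.inr h) ho
        · exact h
    rw [hQ1pref] at hy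
    simp only [hkey1, if_neg ho] at hy
    by_cases hyU : (R i).wpref y x
    · rcases hyU with rfl | hyU
      · exact hxo
      · exact (R i).trans hyU hxo
    · simp only [if_neg hyU] at hy
      have : rk (R i) y < rk (R i) o := by omega
      exact pref_of_rk_lt this
  -- (b) for o in U, Q1 and Q2 strict upper contours coincide
  have hfb : ∀ o, (R i).wpref o x → ∀ y, Q1.pref y o ↔ Q2.pref y o := by
    intro o ho y
    rw [hQ1pref, hQ2pref]
    have hko1 : key1 o = rk (R i) o := by simp [hkey1, ho]
    have hko2 : key2 o = rk (R i) o := by simp [hkey2, ho]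
    have hro := rk_lt_M (R i) o
    constructor
    · intro hy
      rw [hko1] at hy
      have hyU : (R i).wpref y x := by
        by_contra hyU
        simp only [hkey1, if_neg hyU] at hy
        omega
      rw [hko2]
      simp only [hkey2, if_pos hyU]
      simp only [hkey1, if_pos hyU] at hy
      omega
    · intro hy
      rw [hko2] at hy
      have hyU : (R i).wpref y x := by
        by_contra hyU
        simp only [hkey2, if_neg hyU] at hy
        omega
      rw [hko1]
      simp only [hkey1, if_pos hyU]
      simp only [hkey2, if_pos hyU] at hy
      omega
  -- (c) for o outside U, Ri'-upper contour of o inside Q2-upper contour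
  have hfc : ∀ o, ¬ (R i).wpref o x → ∀ y, Ri'.pref y o → Q2.pref y o := by
    intro o ho y hy
    rw [hQ2pref]
    have hko2 : key2 o = M + rk Ri' o := by simp [hkey2, ho]
    by_cases hyU : (R i).wpref y x
    · have t1 : key2 y = rk (R i) y := by simp [hkey2, hyU]
      have t2 := rk_lt_M (R i) y
      omega
    · have t1 : key2 y = M + rk Ri' y := by simp [hkey2, hyU]
      have t2 := rk_lt (P := Ri') hy
      omega
  -- now chain the sums over the complement D
  set D : Finset O := Finset.univ.filter (fun a => ¬ (R i).wpref a x) with hD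
  have hsplit : ∀ g : (N → Pref O) → O → ℝ, ∀ P : N → Pref O,
      ∑ a ∈ U, g P a + ∑ a ∈ D, g P a = ∑ a, g P a := by
    intro g P
    rw [hU, hD]
    exact Finset.sum_filter_add_sum_filter_not _ _ _
  have hDmem : ∀ a, a ∈ D ↔ ¬ (R i).wpref a x := by intro a; simp [hD]
  have h1 : ∑ a ∈ D, f R a ≤ ∑ a ∈ D, f (Function.update R i Q1) a := by
    apply Finset.sum_le_sum
    intro o hoD
    apply hm
    intro j y hy
    rcases eq_or_ne j i with rfl | hj
    · rw [Function.update_self] at hy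
      exact hfa o ((hDmem o).1 hoD) y hy
    · rwa [Function.update_of_ne hj] at hy
  have h2 : ∑ a ∈ U, f (Function.update R i Q1) a
      = ∑ a ∈ U, f (Function.update R i Q2) a := by
    apply Finset.sum_congr rfl
    intro o hoU
    have hoU' := (hmemU o).1 hoU
    apply le_antisymm
    · apply hm
      intro j y hy
      rcases eq_or_ne j i with rfl | hj
      · rw [Function.update_self] at hy ⊢
        exact (hfb o hoU' y).2 hy
      · rwa [Function.update_of_ne hj] at hy ⊢
    · apply hm
      intro j y hy
      rcases eq_or_ne j i with rfl | hj
      · rw [Function.update_self] at hy ⊢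
        exact (hfb o hoU' y).1 hy
      · rwa [Function.update_of_ne hj] at hy ⊢
  have h3 : ∑ a ∈ D, f (Function.update R i Q2) a
      ≤ ∑ a ∈ D, f (Function.update R i Ri') a := by
    apply Finset.sum_le_sum
    intro o hoD
    apply hm
    intro j y hy
    rcases eq_or_ne j i with rfl | hj
    · rw [Function.update_self] at hy ⊢
      exact hfc o ((hDmem o).1 hoD) y hy
    · rwa [Function.update_of_ne hj] at hy ⊢
  have e0 := hsplit f R
  have e1 := hsplit f (Function.update R i Q1)
  have e2 := hsplit f (Function.update R i Q2)
  have e3 := hsplit f (Function.update R i Ri')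
  have s0 := hsum R
  have s1 := hsum (Function.update R i Q1)
  have s2 := hsum (Function.update R i Q2)
  have s3 := hsum (Function.update R i Ri')
  linarith

end Stmt13


/-- for random social choice rules on the universal domain of strict
preferences, sd-strategy-proofness is equivalent to probabilistic monotonicity. -/
theorem stmt13 {N O : Type} [Fintype N] [Fintype O]
    (f : (N → Pref O) → (O → ℝ))
    (hnn : ∀ R o, 0 ≤ f R o) (hsum : ∀ R, ∑ o, f R o = 1) :
    (∀ (i : N) (R : N → Pref O) (Ri' : Pref O) (x : O),
        ∑ a ∈ Finset.univ.filter (fun a => (R i).wpref a x),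
            f (Function.update R i Ri') a ≤
          ∑ a ∈ Finset.univ.filter (fun a => (R i).wpref a x), f R a) ↔
      (∀ (R R' : N → Pref O) (o : O),
        (∀ i y, (R' i).pref y o → (R i).pref y o) → f R o ≤ f R' o) := by
  constructor
  · intro hsp R R' o hm
    exact Stmt13.forward f hsp R R' o hm
  · intro hm i R Ri' x
    exact Stmt13.backward f hsum hm i R Ri' x
end

section
/- The rule with three agents {1,2,3} and three objects {a,b,c} in which agent 1 gets her top object, then agent 2 chooses among the remaining objects if agent 1's bottom two objects are in alphabetical order (i.e., R_1's second choice alphabetically precedes its third choice) and otherwise agent 3 chooses among the remaining objects, with the last agent receiving the last object, violates probabilistic monotonicity: at the profile R where every agent ranks a ≻ b ≻ c the rule outputs μ = (a, b, c), while at R' where agent 1 ranks a ≻ c ≻ b and agents 2, 3 rank a ≻ b ≻ c the rule outputs (a, c, b), even though R' is a μ-monotonic transformation of R. -/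
open Finset
open scoped Classical

/-- The preference 0 ≻ 1 ≻ 2 (a ≻ b ≻ c). -/
def P012 : Pref (Fin 3) where
  pref x y := x < y
  irrefl := by decide
  trans := @fun _ _ _ h1 h2 => h1.trans h2
  total := by decide

/-- The preference a ≻ c ≻ b, i.e. 0 ≻ 2 ≻ 1. -/
def P021 : Pref (Fin 3) where
  pref x y := (![0, 2, 1] : Fin 3 → ℕ) x < (![0, 2, 1] : Fin 3 → ℕ) y
  irrefl := by decide
  trans := @fun _ _ _ h1 h2 => h1.trans h2
  total := by decide

/-- The rule of the example: agent 1 (index 0) gets her top object; if her second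
choice alphabetically precedes her third choice, agent 2 (index 1) chooses next,
otherwise agent 3 (index 2) chooses next; the last agent gets the remaining object. -/
noncomputable def exRule (R : Fin 3 → Pref (Fin 3)) : Fin 3 → Fin 3 :=
  let o1 := (R 0).best Finset.univ
  let s := (R 0).best (Finset.univ.erase o1)
  let t := (R 0).best ((Finset.univ.erase o1).erase s)
  if s < t then
    let o2 := (R 1).best (Finset.univ.erase o1)
    fun i => if i = 0 then o1 else if i = 1 then o2
      else (R 2).best ((Finset.univ.erase o1).erase o2)
  else
    let o3 := (R 2).best (Finset.univ.erase o1)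
    fun i => if i = 0 then o1 else if i = 2 then o3
      else (R 1).best ((Finset.univ.erase o1).erase o3)


lemma Pref.best_eq {O : Type} [Nonempty O] (R : Pref O) (S : Finset O) (x : O)
    (hx : x ∈ S) (h : ∀ y ∈ S, y ≠ x → R.pref x y) : R.best S = x := by
  have hex : ∃ x ∈ S, ∀ y ∈ S, y ≠ x → R.pref x y := ⟨x, hx, h⟩
  rw [Pref.best, dif_pos hex]
  obtain ⟨hc, hspec⟩ := hex.choose_spec
  by_contra hne
  exact R.irrefl x (R.trans (h _ hc hne) (hspec x hx (Ne.symm hne)))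

lemma best012_univ : P012.best (Finset.univ : Finset (Fin 3)) = 0 :=
  Pref.best_eq _ _ _ (by decide) (show ∀ y ∈ (Finset.univ : Finset (Fin 3)), y ≠ 0 → (0 : Fin 3) < y by decide)
lemma best012_e0 : P012.best ((Finset.univ : Finset (Fin 3)).erase 0) = 1 :=
  Pref.best_eq _ _ _ (by decide) (show ∀ y ∈ (Finset.univ : Finset (Fin 3)).erase 0, y ≠ 1 → (1 : Fin 3) < y by decide)
lemma best012_e01 : P012.best (((Finset.univ : Finset (Fin 3)).erase 0).erase 1) = 2 :=
  Pref.best_eq _ _ _ (by decide) (show ∀ y ∈ ((Finset.univ : Finset (Fin 3)).erase 0).erase 1, y ≠ 2 → (2 : Fin 3) < y by decide)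
lemma best021_univ : P021.best (Finset.univ : Finset (Fin 3)) = 0 :=
  Pref.best_eq _ _ _ (by decide) (show ∀ y ∈ (Finset.univ : Finset (Fin 3)), y ≠ 0 → (![0, 2, 1] : Fin 3 → ℕ) 0 < (![0, 2, 1] : Fin 3 → ℕ) y by decide)
lemma best021_e02 : P021.best (((Finset.univ : Finset (Fin 3)).erase 0).erase 2) = 1 :=
  Pref.best_eq _ _ _ (by decide) (show ∀ y ∈ ((Finset.univ : Finset (Fin 3)).erase 0).erase 2, y ≠ 1 → (![0, 2, 1] : Fin 3 → ℕ) 1 < (![0, 2, 1] : Fin 3 → ℕ) y by decide)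
lemma best021_e0 : P021.best ((Finset.univ : Finset (Fin 3)).erase 0) = 2 :=
  Pref.best_eq _ _ _ (by decide) (show ∀ y ∈ (Finset.univ : Finset (Fin 3)).erase 0, y ≠ 2 → (![0, 2, 1] : Fin 3 → ℕ) 2 < (![0, 2, 1] : Fin 3 → ℕ) y by decide)

/-- the example rule violates probabilistic monotonicity: it chooses
μ = (a,b,c) at R, R' is a μ-monotonic transformation of R, yet at R' it chooses (a,c,b). -/
theorem stmt14 :
    exRule (fun _ => P012) = ![0, 1, 2] ∧
    MonTransf (fun _ => P012) (fun i => if i = 0 then P021 else P012) ![0, 1, 2] ∧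
    exRule (fun i => if i = 0 then P021 else P012) = ![0, 2, 1] ∧
    exRule (fun i => if i = 0 then P021 else P012) ≠ ![0, 1, 2] := by
  have e1 : exRule (fun _ => P012) = ![0, 1, 2] := by
    funext i
    simp only [exRule, best012_univ, best012_e0, best012_e01]
    rw [if_pos (by decide : (1 : Fin 3) < 2)]
    fin_cases i <;> simp [best012_e0, best012_e01]
  have e2 : exRule (fun i => if i = 0 then P021 else P012) = ![0, 2, 1] := by
    funext i
    simp only [exRule, reduceIte, best021_univ, best021_e0, best021_e02]
    rw [if_neg (by decide : ¬ (2 : Fin 3) < 1)]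
    fin_cases i <;> simp [best012_e0, best012_e01]
  refine ⟨e1, ?_, e2, by rw [e2]; decide⟩
  intro i y
  fin_cases i <;> simp [P012, P021]
end

section
/- The Random Priority rule satisfies equal-treatment-of-equals: for any profile R, any agents i, j with R_i = R_j, and any assignments μ, μ' with μ_i = μ'_j, μ_j = μ'_i, and μ_k = μ'_k for all k ≠ i, j, RP assigns μ and μ' the same probability at R. -/
open Finset
open scoped Classical

lemma Rswap {N O : Type} (R : N → Pref O) (i j : N) (hij : R i = R j) (m : N) :
    R (Equiv.swap i j m) = R m := by
  rcases eq_or_ne m i with rfl | hi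
  · simp [Equiv.swap_apply_left, hij]
  rcases eq_or_ne m j with rfl | hj
  · simp [Equiv.swap_apply_right, hij]
  · rw [Equiv.swap_apply_of_ne_of_ne hi hj]

lemma sdAux_swap {N O : Type} [Fintype N] [Fintype O] [Nonempty O]
    (q : O → ℕ) (R : N → Pref O) (i j : N) (hij : R i = R j)
    (π : Fin (Fintype.card N) ≃ N) (k : ℕ) :
    sdAux q R (π.trans (Equiv.swap i j)) k = sdAux q R π k := by
  induction k with
  | zero => rfl
  | succ k ih =>
    simp only [sdAux, ih, Equiv.trans_apply, Rswap R i j hij]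

lemma sd_swap {N O : Type} [Fintype N] [Fintype O] [Nonempty O]
    (q : O → ℕ) (R : N → Pref O) (i j : N) (hij : R i = R j)
    (π : Fin (Fintype.card N) ≃ N) (m : N) :
    sd q R (π.trans (Equiv.swap i j)) m = sd q R π (Equiv.swap i j m) := by
  unfold sd
  rw [sdAux_swap q R i j hij]
  simp [Equiv.symm_trans_apply]

/-- Random Priority satisfies equal-treatment-of-equals. -/
theorem stmt17 {N O : Type} [Fintype N] [Fintype O] [Nonempty O]
    (q : O → ℕ) (R : N → Pref O) (i j : N) (hij : R i = R j)
    (μ ν : Assignment N O q)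
    (h1 : μ.toFun i = ν.toFun j) (h2 : μ.toFun j = ν.toFun i)
    (h3 : ∀ k, k ≠ i → k ≠ j → μ.toFun k = ν.toFun k) :
    RPprob q R μ = RPprob q R ν := by
  have hμν : ∀ m, μ.toFun (Equiv.swap i j m) = ν.toFun m := by
    intro m
    rcases eq_or_ne m i with rfl | hi
    · rw [Equiv.swap_apply_left]; exact h2
    rcases eq_or_ne m j with rfl | hj
    · rw [Equiv.swap_apply_right]; exact h1
    · rw [Equiv.swap_apply_of_ne_of_ne hi hj]; exact h3 m hi hj
  have hνμ : ∀ m, ν.toFun (Equiv.swap i j m) = μ.toFun m := by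
    intro m
    have := hμν (Equiv.swap i j m)
    rwa [Equiv.swap_apply_self, eq_comm] at this
  have hinv : ∀ π : Fin (Fintype.card N) ≃ N,
      (π.trans (Equiv.swap i j)).trans (Equiv.swap i j) = π := by
    intro π; ext x; simp [Equiv.swap_apply_self]
  unfold RPprob
  congr 1
  norm_cast
  refine Finset.card_nbij' (fun π => π.trans (Equiv.swap i j))
    (fun π => π.trans (Equiv.swap i j)) ?_ ?_ (fun π _ => hinv π) (fun π _ => hinv π)
  · intro π hπ
    simp only [Finset.mem_coe, Finset.mem_filter, Finset.mem_univ, true_and] at hπ ⊢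
    funext m
    rw [sd_swap q R i j hij, hπ]
    exact hμν m
  · intro π hπ
    simp only [Finset.mem_coe, Finset.mem_filter, Finset.mem_univ, true_and] at hπ ⊢
    funext m
    rw [sd_swap q R i j hij, hπ]
    exact hνμ m
end

section
/- Symmetrization equivalence: let f be a deterministic assignment rule that is Maskin-monotonic and ex-post (Pareto) efficient, and define φ by φ_μ(R) = (1/|N|!) Σ_{π} f_{μ·π}(R_{π(1)},...,R_{π(|N|)}), the uniform randomization over all role-permutations of f. Then φ satisfies equal-treatment-of-equals, ex-post efficiency, and probabilistic monotonicity. -/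
open Finset
open scoped Classical

/-- symmetrizing a Maskin-monotonic, ex-post efficient deterministic rule
yields a rule satisfying equal-treatment-of-equals, ex-post efficiency and
probabilistic monotonicity. -/
theorem stmt19 {N O : Type} [Fintype N] [Fintype O] {q : O → ℕ}
    (F : (N → Pref O) → Assignment N O q)
    (hMaskin : ∀ R R' : N → Pref O, MonTransf R R' (F R).toFun → F R' = F R)
    (hEff : ∀ R : N → Pref O, Efficient R (F R))
    (φ : (N → Pref O) → Assignment N O q → ℝ)
    (hφ : ∀ (R : N → Pref O) (μ : Assignment N O q), φ R μ =
      ((Finset.univ.filter fun π : Equiv.Perm N =>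
          (F (fun i => R (π i))).toFun = fun i => μ.toFun (π i)).card : ℝ) /
        (Nat.factorial (Fintype.card N))) :
    (∀ (R : N → Pref O) (i j : N), R i = R j → ∀ μ ν : Assignment N O q,
        μ.toFun i = ν.toFun j → μ.toFun j = ν.toFun i →
        (∀ k, k ≠ i → k ≠ j → μ.toFun k = ν.toFun k) → φ R μ = φ R ν) ∧
    (∀ (R : N → Pref O) (μ : Assignment N O q), 0 < φ R μ → Efficient R μ) ∧
    (∀ (R R' : N → Pref O) (μ : Assignment N O q),
        MonTransf R R' μ.toFun → φ R μ ≤ φ R' μ) := by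
  classical
  have hfact : (0:ℝ) < (Nat.factorial (Fintype.card N) : ℝ) := by positivity
  refine ⟨?_, ?_, ?_⟩
  · -- ETE
    intro R i j hRij μ ν h1 h2 h3
    rw [hφ, hφ]
    congr 1
    norm_cast
    set τ := Equiv.swap i j with hτ
    have hRτ : ∀ x, R (τ x) = R x := by
      intro x
      rcases eq_or_ne x i with rfl | hi
      · simp [hτ, hRij]
      rcases eq_or_ne x j with rfl | hj
      · simp [hτ, hRij]
      · simp [hτ, Equiv.swap_apply_of_ne_of_ne hi hj]
    have hντ : ∀ x, ν.toFun (τ x) = μ.toFun x := by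
      intro x
      rcases eq_or_ne x i with rfl | hi
      · simp [hτ, h1.symm]
      rcases eq_or_ne x j with rfl | hj
      · simp [hτ, h2.symm]
      · simp [hτ, Equiv.swap_apply_of_ne_of_ne hi hj, (h3 x hi hj).symm]
    have hμτ : ∀ x, μ.toFun (τ x) = ν.toFun x := by
      intro x
      have := hντ (τ x)
      simp only [hτ, Equiv.swap_apply_self] at this
      rw [← this]
    refine Finset.card_bij' (fun π _ => π.trans τ) (fun π _ => π.trans τ) ?_ ?_ ?_ ?_
    · intro π hπ
      simp only [Finset.mem_filter, Finset.mem_univ, true_and] at hπ ⊢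
      have e1 : (fun k => R (π.trans τ k)) = fun k => R (π k) := by
        funext k; exact hRτ (π k)
      have e2 : (fun k => ν.toFun (π.trans τ k)) = fun k => μ.toFun (π k) := by
        funext k; exact hντ (π k)
      rw [e1, e2]; exact hπ
    · intro π hπ
      simp only [Finset.mem_filter, Finset.mem_univ, true_and] at hπ ⊢
      have e1 : (fun k => R (π.trans τ k)) = fun k => R (π k) := by
        funext k; exact hRτ (π k)
      have e2 : (fun k => μ.toFun (π.trans τ k)) = fun k => ν.toFun (π k) := by
        funext k; exact hμτ (π k)
      rw [e1, e2]; exact hπ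
    · intro π _; ext k; simp [hτ]
    · intro π _; ext k; simp [hτ]
  · -- ex-post efficiency
    intro R μ hpos
    rw [hφ] at hpos
    obtain ⟨π, hπ⟩ : (Finset.univ.filter fun π : Equiv.Perm N =>
        (F (fun i => R (π i))).toFun = fun i => μ.toFun (π i)).Nonempty := by
      rw [← Finset.card_pos]
      rcases Nat.eq_zero_or_pos (Finset.univ.filter fun π : Equiv.Perm N =>
        (F (fun i => R (π i))).toFun = fun i => μ.toFun (π i)).card with h0 | h
      · rw [h0] at hpos; norm_num at hpos
      · exact h
    simp only [Finset.mem_filter, Finset.mem_univ, true_and] at hπ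
    rintro ⟨ν, hw, j, hs⟩
    refine hEff (fun i => R (π i)) ⟨⟨fun k => ν.toFun (π k), ?_⟩, ?_, π.symm j, ?_⟩
    · intro x
      have : (Finset.univ.filter fun k => ν.toFun (π k) = x).card
          = (Finset.univ.filter fun k => ν.toFun k = x).card := by
        apply Finset.card_bij (fun k _ => π k)
        · intro k hk; simp only [Finset.mem_filter, Finset.mem_univ, true_and] at hk ⊢; exact hk
        · intro a _ b _ h; exact π.injective h
        · intro b hb
          simp only [Finset.mem_filter, Finset.mem_univ, true_and] at hb
          exact ⟨π.symm b, by simp [hb], by simp⟩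
      rw [this]; exact ν.capacity x
    · intro k
      have := hw (π k)
      rw [hπ]
      exact this
    · have := hs
      rw [hπ]
      simpa using this
  · -- probabilistic monotonicity
    intro R R' μ hmt
    rw [hφ, hφ]
    have hsub : (Finset.univ.filter fun π : Equiv.Perm N =>
        (F (fun i => R (π i))).toFun = fun i => μ.toFun (π i)) ⊆
        (Finset.univ.filter fun π : Equiv.Perm N =>
        (F (fun i => R' (π i))).toFun = fun i => μ.toFun (π i)) := by
      intro π hπ
      simp only [Finset.mem_filter, Finset.mem_univ, true_and] at hπ ⊢
      have hmt' : MonTransf (fun i => R (π i)) (fun i => R' (π i))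
          (F (fun i => R (π i))).toFun := by
        intro k y hp
        rw [hπ] at hp ⊢
        exact hmt (π k) y hp
      rw [hMaskin _ _ hmt', hπ]
    have hle := Finset.card_le_card hsub
    gcongr
end
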